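/- arXiv:math/0010150 — 13 statements merged into one kernel-verified Lean document; each statement's English description precedes it below -/
import Mathlib

section
/- The region D = {(s, i1, i2) ∈ ℝ³ : s + i1 + i2 = 1, s ≥ 0, i1 ≥ 0, i2 ≥ 0} is positively invariant for the proportions system: every differentiable function x : ℝ → ℝ³ satisfying x'(t) equal to the right-hand side of the proportions system at x(t) for all t ≥ 0, with x(0) ∈ D, satisfies x(t) ∈ D for all t ≥ 0. -/
open Filter Topology Matrix

/-- Right-hand side of the proportions system on `ℝ × ℝ × ℝ`
(coordinates `(s, i1, i2)`). -/
noncomputable def propSys (b1 b2 ε l1 l2 γ1 γ2 p q : ℝ) (x : ℝ × ℝ × ℝ) : ℝ × ℝ × ℝ :=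
  (b1*(1 - x.1) + b2*x.1*(1 - x.1) + γ1*x.2.1 + γ2*x.2.2
      + (ε - l1)*x.2.1*x.1 + (ε - l2)*x.2.2*x.1,
   p*x.1*(l1*x.2.1 + l2*x.2.2) + ε*x.2.1*(x.2.1 + x.2.2)
      - (b1 + ε + γ1)*x.2.1 - b2*x.1*x.2.1,
   q*x.1*(l1*x.2.1 + l2*x.2.2) + ε*x.2.2*(x.2.1 + x.2.2)
      - (b1 + ε + γ2)*x.2.2 - b2*x.1*x.2.2)

/-!
The defect `V = (s + i1 + i2 - 1)² + min(s,0)² + min(i1,0)² + min(i2,0)²` vanishes exactly on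
the simplex and is differentiable along trajectories. Because `p + q = 1`, the total
`N = s + i1 + i2` obeys `N' = -(N - 1) (b1 + b2 s - ε (i1 + i2))`. Every other term of the field
is either a multiple of the coordinate it drives, or a cross term that is nonnegative when the
other coordinates are (`b1 (1 - s)`, `γ1 i1`, `γ2 i2` in `s'`, `p l2 s i2` in `i1'`, `q l1 s i1`
in `i2'`). On a compact time interval the trajectory is bounded, so these facts give
`V' ≤ K V`, and Grönwall's inequality with `V(0) = 0` forces `V = 0`.
-/

open Set

theorem hasDerivAt_min_zero_sq_of_ne {y : ℝ} (hy : y ≠ 0) :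
    HasDerivAt (fun z : ℝ => min z 0 ^ 2) (2 * min y 0) y := by
  rcases hy.lt_or_gt with hy | hy
  · have h : (fun z : ℝ => min z 0 ^ 2) =ᶠ[𝓝 y] fun z => z ^ 2 := by
      filter_upwards [Iio_mem_nhds hy] with z hz
      rw [min_eq_left hz.le]
    rw [min_eq_left hy.le]
    simpa using (hasDerivAt_pow 2 y).congr_of_eventuallyEq h
  · have h : (fun z : ℝ => min z 0 ^ 2) =ᶠ[𝓝 y] fun _ => 0 := by
      filter_upwards [Ioi_mem_nhds hy] with z hz
      rw [min_eq_right (le_of_lt hz), zero_pow two_ne_zero]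
    rw [min_eq_right hy.le, mul_zero]
    exact (hasDerivAt_const y 0).congr_of_eventuallyEq h

theorem hasDerivAt_min_zero_sq (y : ℝ) :
    HasDerivAt (fun z : ℝ => min z 0 ^ 2) (2 * min y 0) y :=
  hasDerivAt_of_hasDerivAt_of_ne' (fun _ hz => hasDerivAt_min_zero_sq_of_ne hz)
    (by fun_prop) (by fun_prop) y

theorem HasDerivAt.min_zero_sq {f : ℝ → ℝ} {f' t : ℝ} (hf : HasDerivAt f f' t) :
    HasDerivAt (fun t => min (f t) 0 ^ 2) (2 * min (f t) 0 * f') t :=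
  (hasDerivAt_min_zero_sq (f t)).comp t hf

theorem le_zero_of_hasDerivAt_le_mul {F F' : ℝ → ℝ} {K T : ℝ} (hT : 0 ≤ T)
    (hF : ∀ t ∈ Icc 0 T, HasDerivAt F (F' t) t) (hle : ∀ t ∈ Ico 0 T, F' t ≤ K * F t)
    (h0 : F 0 ≤ 0) : F T ≤ 0 := by
  have h := le_gronwallBound_of_liminf_deriv_right_le
    (fun t ht => (hF t ht).continuousAt.continuousWithinAt)
    (fun t ht _ hr => (hF t (Ico_subset_Icc_self ht)).hasDerivWithinAt.liminf_right_slope_le hr)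
    h0 (fun t ht => (hle t ht).trans_eq (add_zero _).symm) T ⟨hT, le_rfl⟩
  rwa [gronwallBound_ε0_δ0] at h

theorem self_mul_min_zero (x : ℝ) : x * min x 0 = min x 0 ^ 2 := by
  rcases le_total x 0 with h | h <;> simp [h, sq]

theorem min_zero_mul_one_sub_nonpos (x : ℝ) : min x 0 * (1 - x) ≤ 0 := by
  rcases le_total x 0 with h | h
  · rw [min_eq_left h]; nlinarith
  · simp [min_eq_right h]

theorem two_mul_min_zero_mul_self_mul_le {x a C : ℝ} (ha : |a| ≤ C) :
    2 * min x 0 * (x * a) ≤ 2 * C * min x 0 ^ 2 := by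
  have h : 2 * min x 0 * (x * a) = 2 * a * min x 0 ^ 2 := by rw [← self_mul_min_zero]; ring
  rw [h]
  nlinarith [(abs_le.1 ha).2, sq_nonneg (min x 0)]

theorem two_mul_min_zero_mul_le (x y : ℝ) : 2 * min x 0 * y ≤ min x 0 ^ 2 + min y 0 ^ 2 := by
  have h : min x 0 * y ≤ min x 0 * min y 0 :=
    mul_le_mul_of_nonpos_left (min_le_left y 0) (min_le_right x 0)
  nlinarith [sq_nonneg (min x 0 - min y 0)]

theorem mul_min_zero_add_min_zero_le_mul {x y M : ℝ} (hx : |x| ≤ M) (hy : |y| ≤ M) :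
    M * (min x 0 + min y 0) ≤ x * y := by
  obtain ⟨hx₁, hx₂⟩ := abs_le.1 hx
  obtain ⟨hy₁, hy₂⟩ := abs_le.1 hy
  rcases le_total x 0 with h₁ | h₁ <;> rcases le_total y 0 with h₂ | h₂ <;>
    simp only [min_eq_left, min_eq_right, h₁, h₂] <;> nlinarith

theorem two_mul_min_zero_mul_mul_le {z x y M : ℝ} (hx : |x| ≤ M) (hy : |y| ≤ M) :
    2 * min z 0 * (x * y) ≤ M * (2 * min z 0 ^ 2 + min x 0 ^ 2 + min y 0 ^ 2) := by
  have h := mul_le_mul_of_nonpos_left (mul_min_zero_add_min_zero_le_mul hx hy)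
    (min_le_right z 0)
  have hM : 0 ≤ M := (abs_nonneg x).trans hx
  nlinarith [mul_nonneg hM (sq_nonneg (min z 0 - min x 0)),
    mul_nonneg hM (sq_nonneg (min z 0 - min y 0))]

def propSysRateS (b2 ε l1 l2 : ℝ) (x : ℝ × ℝ × ℝ) : ℝ :=
  b2 * (1 - x.1) + (ε - l1) * x.2.1 + (ε - l2) * x.2.2

def propSysRateI1 (b1 b2 ε l1 γ1 p : ℝ) (x : ℝ × ℝ × ℝ) : ℝ :=
  p * l1 * x.1 + ε * (x.2.1 + x.2.2) - (b1 + ε + γ1) - b2 * x.1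

def propSysRateI2 (b1 b2 ε l2 γ2 q : ℝ) (x : ℝ × ℝ × ℝ) : ℝ :=
  q * l2 * x.1 + ε * (x.2.1 + x.2.2) - (b1 + ε + γ2) - b2 * x.1

def propSysRateTotal (b1 b2 ε : ℝ) (x : ℝ × ℝ × ℝ) : ℝ := b1 + b2 * x.1 - ε * (x.2.1 + x.2.2)

def propSysRateBound (b1 b2 ε l1 l2 γ1 γ2 p q : ℝ) (x : ℝ × ℝ × ℝ) : ℝ :=
  |x.1| + |x.2.1| + |x.2.2| + |propSysRateS b2 ε l1 l2 x| + |propSysRateI1 b1 b2 ε l1 γ1 p x|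
    + |propSysRateI2 b1 b2 ε l2 γ2 q x| + |propSysRateTotal b1 b2 ε x|

theorem continuous_propSysRateBound (b1 b2 ε l1 l2 γ1 γ2 p q : ℝ) :
    Continuous (propSysRateBound b1 b2 ε l1 l2 γ1 γ2 p q) := by
  unfold propSysRateBound propSysRateS propSysRateI1 propSysRateI2 propSysRateTotal
  fun_prop

section PropSys

variable {b1 b2 ε l1 l2 γ1 γ2 p q : ℝ}

theorem abs_le_of_propSysRateBound_le {x : ℝ × ℝ × ℝ} {C : ℝ}
    (hC : propSysRateBound b1 b2 ε l1 l2 γ1 γ2 p q x ≤ C) :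
    |x.1| ≤ C ∧ |x.2.1| ≤ C ∧ |x.2.2| ≤ C ∧ |propSysRateS b2 ε l1 l2 x| ≤ C
      ∧ |propSysRateI1 b1 b2 ε l1 γ1 p x| ≤ C ∧ |propSysRateI2 b1 b2 ε l2 γ2 q x| ≤ C
      ∧ |propSysRateTotal b1 b2 ε x| ≤ C := by
  unfold propSysRateBound at hC
  generalize propSysRateS b2 ε l1 l2 x = A, propSysRateI1 b1 b2 ε l1 γ1 p x = B₁,
    propSysRateI2 b1 b2 ε l2 γ2 q x = B₂, propSysRateTotal b1 b2 ε x = g at hC ⊢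
  have := abs_nonneg x.1; have := abs_nonneg x.2.1; have := abs_nonneg x.2.2
  have := abs_nonneg A; have := abs_nonneg B₁; have := abs_nonneg B₂; have := abs_nonneg g
  refine ⟨?_, ?_, ?_, ?_, ?_, ?_, ?_⟩ <;> linarith

variable (x : ℝ × ℝ × ℝ)

theorem propSys_fst : (propSys b1 b2 ε l1 l2 γ1 γ2 p q x).1 =
    b1 * (1 - x.1) + x.1 * propSysRateS b2 ε l1 l2 x + γ1 * x.2.1 + γ2 * x.2.2 := by
  simp only [propSys, propSysRateS]; ring

theorem propSys_snd_fst : (propSys b1 b2 ε l1 l2 γ1 γ2 p q x).2.1 =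
    x.2.1 * propSysRateI1 b1 b2 ε l1 γ1 p x + p * l2 * (x.1 * x.2.2) := by
  simp only [propSys, propSysRateI1]; ring

theorem propSys_snd_snd : (propSys b1 b2 ε l1 l2 γ1 γ2 p q x).2.2 =
    x.2.2 * propSysRateI2 b1 b2 ε l2 γ2 q x + q * l1 * (x.1 * x.2.1) := by
  simp only [propSys, propSysRateI2]; ring

theorem propSys_sum (hpq : p + q = 1) :
    (propSys b1 b2 ε l1 l2 γ1 γ2 p q x).1 + (propSys b1 b2 ε l1 l2 γ1 γ2 p q x).2.1
      + (propSys b1 b2 ε l1 l2 γ1 γ2 p q x).2.2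
      = -((x.1 + x.2.1 + x.2.2 - 1) * propSysRateTotal b1 b2 ε x) := by
  obtain rfl : q = 1 - p := by linarith
  simp only [propSys, propSysRateTotal]; ring

end PropSys

def simplexDefect (x : ℝ × ℝ × ℝ) : ℝ :=
  (x.1 + x.2.1 + x.2.2 - 1) ^ 2 + min x.1 0 ^ 2 + min x.2.1 0 ^ 2 + min x.2.2 0 ^ 2

def simplexDefectDeriv (x v : ℝ × ℝ × ℝ) : ℝ :=
  2 * (x.1 + x.2.1 + x.2.2 - 1) * (v.1 + v.2.1 + v.2.2)
    + 2 * min x.1 0 * v.1 + 2 * min x.2.1 0 * v.2.1 + 2 * min x.2.2 0 * v.2.2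

theorem simplexDefect_nonpos_iff {x : ℝ × ℝ × ℝ} : simplexDefect x ≤ 0 ↔
    x.1 + x.2.1 + x.2.2 = 1 ∧ 0 ≤ x.1 ∧ 0 ≤ x.2.1 ∧ 0 ≤ x.2.2 := by
  constructor
  · intro h
    have := sq_nonneg (x.1 + x.2.1 + x.2.2 - 1)
    have := sq_nonneg (min x.1 0)
    have := sq_nonneg (min x.2.1 0)
    have := sq_nonneg (min x.2.2 0)
    unfold simplexDefect at h
    have hzero : (x.1 + x.2.1 + x.2.2 - 1) ^ 2 = 0 ∧ min x.1 0 ^ 2 = 0 ∧ min x.2.1 0 ^ 2 = 0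
        ∧ min x.2.2 0 ^ 2 = 0 := by
      refine ⟨?_, ?_, ?_, ?_⟩ <;> linarith
    simpa only [pow_eq_zero_iff two_ne_zero, sub_eq_zero, min_eq_right_iff] using hzero
  · rintro ⟨hsum, hs, hi1, hi2⟩
    simp [simplexDefect, hsum, hs, hi1, hi2]

theorem hasDerivAt_simplexDefect_comp {x : ℝ → ℝ × ℝ × ℝ} {v : ℝ × ℝ × ℝ} {t : ℝ}
    (hx : HasDerivAt x v t) :
    HasDerivAt (fun t => simplexDefect (x t)) (simplexDefectDeriv (x t) v) t := by
  have hs : HasDerivAt (fun t => (x t).1) v.1 t := hx.fst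
  have hi1 : HasDerivAt (fun t => (x t).2.1) v.2.1 t := hx.snd.fst
  have hi2 : HasDerivAt (fun t => (x t).2.2) v.2.2 t := hx.snd.snd
  have h := ((((hs.add hi1).add hi2).sub_const 1).pow 2).add hs.min_zero_sq
    |>.add hi1.min_zero_sq |>.add hi2.min_zero_sq
  refine HasDerivAt.congr_deriv (f := fun t => simplexDefect (x t)) h ?_
  simp only [simplexDefectDeriv, Pi.add_apply]
  norm_num

theorem simplexDefectDeriv_propSys_le {b1 b2 ε l1 l2 γ1 γ2 p q C : ℝ} {x : ℝ × ℝ × ℝ}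
    (hb1 : 0 ≤ b1) (hγ1 : 0 ≤ γ1) (hγ2 : 0 ≤ γ2) (hpl2 : 0 ≤ p * l2) (hql1 : 0 ≤ q * l1)
    (hpq : p + q = 1) (hC : propSysRateBound b1 b2 ε l1 l2 γ1 γ2 p q x ≤ C) :
    simplexDefectDeriv x (propSys b1 b2 ε l1 l2 γ1 γ2 p q x)
      ≤ (2 * C + γ1 + γ2 + 2 * C * (p * l2 + q * l1)) * simplexDefect x := by
  obtain ⟨hs, hi1, hi2, hA, hB1, hB2, hg⟩ := abs_le_of_propSysRateBound_le hC
  have hC0 : 0 ≤ C := (abs_nonneg _).trans hs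
  rw [simplexDefectDeriv, propSys_sum x hpq, propSys_fst, propSys_snd_fst, propSys_snd_snd]
  set e := x.1 + x.2.1 + x.2.2 - 1
  have hsum : 2 * e * -(e * propSysRateTotal b1 b2 ε x) ≤ 2 * C * e ^ 2 := by
    nlinarith [mul_le_mul_of_nonneg_left (neg_le.1 (abs_le.1 hg).1) (sq_nonneg e)]
  have hs₁ := mul_nonpos_of_nonneg_of_nonpos hb1 (min_zero_mul_one_sub_nonpos x.1)
  have hs₂ := two_mul_min_zero_mul_self_mul_le (x := x.1) hA
  have hs₃ := mul_le_mul_of_nonneg_left (two_mul_min_zero_mul_le x.1 x.2.1) hγ1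
  have hs₄ := mul_le_mul_of_nonneg_left (two_mul_min_zero_mul_le x.1 x.2.2) hγ2
  have hi₁ := two_mul_min_zero_mul_self_mul_le (x := x.2.1) hB1
  have hi₂ := mul_le_mul_of_nonneg_left (two_mul_min_zero_mul_mul_le (z := x.2.1) hs hi2) hpl2
  have hj₁ := two_mul_min_zero_mul_self_mul_le (x := x.2.2) hB2
  have hj₂ := mul_le_mul_of_nonneg_left (two_mul_min_zero_mul_mul_le (z := x.2.2) hs hi1) hql1
  simp only [simplexDefect]
  nlinarith [sq_nonneg e, sq_nonneg (min x.1 0), sq_nonneg (min x.2.1 0),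
    sq_nonneg (min x.2.2 0), mul_nonneg hC0 hpl2, mul_nonneg hC0 hql1]

theorem stmt1_general (b1 b2 ε l1 l2 γ1 γ2 p q : ℝ)
    (hb1 : 0 < b1) (hl1 : 0 < l1) (hl2 : 0 < l2)
    (hγ1 : 0 < γ1) (hγ2 : 0 < γ2) (hp : 0 < p) (hq : 0 < q)
    (hpq : p + q = 1) :
    ∀ x : ℝ → ℝ × ℝ × ℝ,
      (∀ t : ℝ, 0 ≤ t → HasDerivAt x (propSys b1 b2 ε l1 l2 γ1 γ2 p q (x t)) t) →
      ((x 0).1 + (x 0).2.1 + (x 0).2.2 = 1 ∧ 0 ≤ (x 0).1 ∧ 0 ≤ (x 0).2.1 ∧ 0 ≤ (x 0).2.2) →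
      ∀ t : ℝ, 0 ≤ t →
        (x t).1 + (x t).2.1 + (x t).2.2 = 1 ∧ 0 ≤ (x t).1 ∧ 0 ≤ (x t).2.1 ∧ 0 ≤ (x t).2.2 := by
  intro x hx h0 T hT
  have hxc : ContinuousOn x (Icc 0 T) := fun t ht =>
    (hx t ht.1).continuousAt.continuousWithinAt
  obtain ⟨C, hC⟩ := isCompact_Icc.exists_bound_of_continuousOn
    ((continuous_propSysRateBound b1 b2 ε l1 l2 γ1 γ2 p q).comp_continuousOn hxc)
  have hbound : ∀ t ∈ Ico 0 T, propSysRateBound b1 b2 ε l1 l2 γ1 γ2 p q (x t) ≤ C :=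
    fun t ht => (le_abs_self _).trans (hC t (Ico_subset_Icc_self ht))
  have hdefect : simplexDefect (x T) ≤ 0 :=
    le_zero_of_hasDerivAt_le_mul (F := fun t => simplexDefect (x t)) hT
      (fun t ht => hasDerivAt_simplexDefect_comp (hx t ht.1))
      (fun t ht => simplexDefectDeriv_propSys_le hb1.le hγ1.le hγ2.le (by positivity)
        (by positivity) hpq (hbound t ht))
      (simplexDefect_nonpos_iff.2 h0)
  exact simplexDefect_nonpos_iff.1 hdefect

theorem stmt1 (b b1 b2 d ε l1 l2 γ1 γ2 p q : ℝ)
    (hb1 : 0 < b1) (hd : 0 < d) (hε : 0 < ε) (hl1 : 0 < l1) (hl2 : 0 < l2)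
    (hγ1 : 0 < γ1) (hγ2 : 0 < γ2) (hp : 0 < p) (hq : 0 < q)
    (hb : b1 ≤ b) (hb2 : b2 = b - b1) (hpq : p + q = 1) :
    ∀ x : ℝ → ℝ × ℝ × ℝ,
      (∀ t : ℝ, 0 ≤ t → HasDerivAt x (propSys b1 b2 ε l1 l2 γ1 γ2 p q (x t)) t) →
      ((x 0).1 + (x 0).2.1 + (x 0).2.2 = 1 ∧ 0 ≤ (x 0).1 ∧ 0 ≤ (x 0).2.1 ∧ 0 ≤ (x 0).2.2) →
      ∀ t : ℝ, 0 ≤ t →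
        (x t).1 + (x t).2.1 + (x t).2.2 = 1 ∧ 0 ≤ (x t).1 ∧ 0 ≤ (x t).2.1 ∧ 0 ≤ (x t).2.2 :=
  stmt1_general b1 b2 ε l1 l2 γ1 γ2 p q hb1 hl1 hl2 hγ1 hγ2 hp hq hpq
end

section
/- The point (1, 0, 0) is an equilibrium of the proportions system, and it is the only equilibrium lying on the boundary of D: if (s, i1, i2) ∈ D satisfies s = 0 or i1 = 0 or i2 = 0 and the right-hand side of the proportions system vanishes at (s, i1, i2), then (s, i1, i2) = (1, 0, 0). -/
open Filter Topology Matrix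

theorem stmt2 (b b1 b2 d ε l1 l2 γ1 γ2 p q : ℝ)
    (hb1 : 0 < b1) (hd : 0 < d) (hε : 0 < ε) (hl1 : 0 < l1) (hl2 : 0 < l2)
    (hγ1 : 0 < γ1) (hγ2 : 0 < γ2) (hp : 0 < p) (hq : 0 < q)
    (hb : b1 ≤ b) (hb2 : b2 = b - b1) (hpq : p + q = 1) :
    propSys b1 b2 ε l1 l2 γ1 γ2 p q (1, 0, 0) = 0 ∧
    ∀ s i1 i2 : ℝ,
      (s + i1 + i2 = 1 ∧ 0 ≤ s ∧ 0 ≤ i1 ∧ 0 ≤ i2) →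
      (s = 0 ∨ i1 = 0 ∨ i2 = 0) →
      propSys b1 b2 ε l1 l2 γ1 γ2 p q (s, i1, i2) = 0 →
      (s, i1, i2) = ((1 : ℝ), (0 : ℝ), (0 : ℝ)) := by
  constructor
  · simp [propSys, Prod.ext_iff]
  · rintro s i1 i2 ⟨hsum, hs, hi1, hi2⟩ hbd heq
    simp only [propSys, Prod.ext_iff, Prod.fst_zero, Prod.snd_zero] at heq
    obtain ⟨e1, e2, e3⟩ := heq
    have key0 : s = 0 → False := by
      intro h0
      subst h0
      have h12 : i1 + i2 = 1 := by linarith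
      have hi1z : i1 = 0 := by nlinarith [e2]
      have hi2z : i2 = 0 := by nlinarith [e3]
      linarith
    have hs0 : s ≠ 0 := fun h => key0 h
    rcases hbd with h0 | h0 | h0
    · exact absurd h0 hs0
    · subst h0
      have : p * s * (l2 * i2) = 0 := by linarith [e2]
      have hsi2 : s * i2 = 0 := by
        rcases mul_eq_zero.1 this with h | h
        · rcases mul_eq_zero.1 h with h | h
          · exact absurd h hp.ne'
          · exact absurd h hs0
        · rcases mul_eq_zero.1 h with h | h
          · exact absurd h hl2.ne'
          · simp [h]
      rcases mul_eq_zero.1 hsi2 with h | h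
      · exact absurd h hs0
      · subst h
        have : s = 1 := by linarith
        simp [this]
    · subst h0
      have : q * s * (l1 * i1) = 0 := by linarith [e3]
      have hsi1 : s * i1 = 0 := by
        rcases mul_eq_zero.1 this with h | h
        · rcases mul_eq_zero.1 h with h | h
          · exact absurd h hq.ne'
          · exact absurd h hs0
        · rcases mul_eq_zero.1 h with h | h
          · exact absurd h hl1.ne'
          · simp [h]
      rcases mul_eq_zero.1 hsi1 with h | h
      · exact absurd h hs0
      · subst h
        have : s = 1 := by linarith
        simp [this]
end

section
/- Let S, I1, I2 : ℝ → ℝ be differentiable functions satisfying the original model equations S' = b1·N + (b2 − d)·S + γ1·I1 + γ2·I2 − λ1·I1·S/N − λ2·I2·S/N, I1' = p(λ1·I1·S/N + λ2·I2·S/N) − (d + ε + γ1)·I1, I2' = q(λ1·I1·S/N + λ2·I2·S/N) − (d + ε + γ2)·I2, where N = S + I1 + I2 and N(t) > 0 for all t. Then the fractions s = S/N, i1 = I1/N, i2 = I2/N satisfy the proportions system: s' = b1(1−s) + b2·s(1−s) + γ1·i1 + γ2·i2 + (ε − λ1)·i1·s + (ε − λ2)·i2·s; i1' = p·s·(λ1·i1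 + λ2·i2) + ε·i1·(i1 + i2) − (b1 + ε + γ1)·i1 − b2·s·i1; i2' = q·s·(λ1·i1 + λ2·i2) + ε·i2·(i1 + i2) − (b1 + ε + γ2)·i2 − b2·s·i2. -/
open Filter Topology Matrix

private lemma nprime (b1 b d ε l1 l2 γ1 γ2 p x y z : ℝ) :
    ((b1*(x + y + z) + ((b - b1) - d)*x + γ1*y + γ2*z
        - l1*y*x/(x + y + z) - l2*z*x/(x + y + z))
      + (p*(l1*y*x/(x + y + z) + l2*z*x/(x + y + z)) - (d + ε + γ1)*y)
      + ((1-p)*(l1*y*x/(x + y + z) + l2*z*x/(x + y + z)) - (d + ε + γ2)*z))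
    = b1*(x+y+z) + (b-b1)*x - d*(x+y+z) - ε*(y+z) := by ring

private lemma aux1 (b b1 d ε l1 l2 γ1 γ2 x y z : ℝ) (h : x + y + z ≠ 0) :
    b1*(1 - x/(x+y+z)) + (b-b1)*(x/(x+y+z))*(1 - x/(x+y+z))
      + γ1*(y/(x+y+z)) + γ2*(z/(x+y+z))
      + (ε - l1)*(y/(x+y+z))*(x/(x+y+z)) + (ε - l2)*(z/(x+y+z))*(x/(x+y+z))
    = ((b1*(x + y + z) + ((b - b1) - d)*x + γ1*y + γ2*z
        - l1*y*x/(x + y + z) - l2*z*x/(x + y + z)) * (x+y+z)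
      - x * (b1*(x+y+z) + (b-b1)*x - d*(x+y+z) - ε*(y+z))) / (x+y+z)^2 := by
  field_simp
  ring

private lemma aux2 (b b1 d ε l1 l2 γ1 p x y z : ℝ) (h : x + y + z ≠ 0) :
    p*(x/(x+y+z))*(l1*(y/(x+y+z)) + l2*(z/(x+y+z)))
      + ε*(y/(x+y+z))*(y/(x+y+z) + z/(x+y+z))
      - (b1 + ε + γ1)*(y/(x+y+z)) - (b-b1)*(x/(x+y+z))*(y/(x+y+z))
    = ((p*(l1*y*x/(x + y + z) + l2*z*x/(x + y + z)) - (d + ε + γ1)*y) * (x+y+z)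
      - y * (b1*(x+y+z) + (b-b1)*x - d*(x+y+z) - ε*(y+z))) / (x+y+z)^2 := by
  field_simp
  ring

private lemma aux3 (b b1 d ε l1 l2 γ2 p x y z : ℝ) (h : x + y + z ≠ 0) :
    (1-p)*(x/(x+y+z))*(l1*(y/(x+y+z)) + l2*(z/(x+y+z)))
      + ε*(z/(x+y+z))*(y/(x+y+z) + z/(x+y+z))
      - (b1 + ε + γ2)*(z/(x+y+z)) - (b-b1)*(x/(x+y+z))*(z/(x+y+z))
    = (((1-p)*(l1*y*x/(x + y + z) + l2*z*x/(x + y + z)) - (d + ε + γ2)*z) * (x+y+z)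
      - z * (b1*(x+y+z) + (b-b1)*x - d*(x+y+z) - ε*(y+z))) / (x+y+z)^2 := by
  field_simp
  ring

theorem stmt3 (b b1 b2 d ε l1 l2 γ1 γ2 p q : ℝ)
    (hb1 : 0 < b1) (hd : 0 < d) (hε : 0 < ε) (hl1 : 0 < l1) (hl2 : 0 < l2)
    (hγ1 : 0 < γ1) (hγ2 : 0 < γ2) (hp : 0 < p) (hq : 0 < q)
    (hb : b1 ≤ b) (hb2 : b2 = b - b1) (hpq : p + q = 1)
    (S I1 I2 : ℝ → ℝ)
    (hN : ∀ t : ℝ, 0 < S t + I1 t + I2 t)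
    (hS : ∀ t : ℝ, HasDerivAt S
      (b1*(S t + I1 t + I2 t) + (b2 - d)*S t + γ1*I1 t + γ2*I2 t
        - l1*I1 t*S t/(S t + I1 t + I2 t) - l2*I2 t*S t/(S t + I1 t + I2 t)) t)
    (hI1 : ∀ t : ℝ, HasDerivAt I1
      (p*(l1*I1 t*S t/(S t + I1 t + I2 t) + l2*I2 t*S t/(S t + I1 t + I2 t))
        - (d + ε + γ1)*I1 t) t)
    (hI2 : ∀ t : ℝ, HasDerivAt I2
      (q*(l1*I1 t*S t/(S t + I1 t + I2 t) + l2*I2 t*S t/(S t + I1 t + I2 t))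
        - (d + ε + γ2)*I2 t) t) :
    ∀ t : ℝ,
      HasDerivAt (fun u => S u / (S u + I1 u + I2 u))
        (b1*(1 - S t/(S t + I1 t + I2 t))
          + b2*(S t/(S t + I1 t + I2 t))*(1 - S t/(S t + I1 t + I2 t))
          + γ1*(I1 t/(S t + I1 t + I2 t)) + γ2*(I2 t/(S t + I1 t + I2 t))
          + (ε - l1)*(I1 t/(S t + I1 t + I2 t))*(S t/(S t + I1 t + I2 t))
          + (ε - l2)*(I2 t/(S t + I1 t + I2 t))*(S t/(S t + I1 t + I2 t))) t ∧
      HasDerivAt (fun u => I1 u / (S u + I1 u + I2 u))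
        (p*(S t/(S t + I1 t + I2 t))
            *(l1*(I1 t/(S t + I1 t + I2 t)) + l2*(I2 t/(S t + I1 t + I2 t)))
          + ε*(I1 t/(S t + I1 t + I2 t))
            *(I1 t/(S t + I1 t + I2 t) + I2 t/(S t + I1 t + I2 t))
          - (b1 + ε + γ1)*(I1 t/(S t + I1 t + I2 t))
          - b2*(S t/(S t + I1 t + I2 t))*(I1 t/(S t + I1 t + I2 t))) t ∧
      HasDerivAt (fun u => I2 u / (S u + I1 u + I2 u))
        (q*(S t/(S t + I1 t + I2 t))
            *(l1*(I1 t/(S t + I1 t + I2 t)) + l2*(I2 t/(S t + I1 t + I2 t)))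
          + ε*(I2 t/(S t + I1 t + I2 t))
            *(I1 t/(S t + I1 t + I2 t) + I2 t/(S t + I1 t + I2 t))
          - (b1 + ε + γ2)*(I2 t/(S t + I1 t + I2 t))
          - b2*(S t/(S t + I1 t + I2 t))*(I2 t/(S t + I1 t + I2 t))) t := by
  subst hb2
  have hq' : q = 1 - p := by linarith
  subst hq'
  intro t
  have hNt : S t + I1 t + I2 t ≠ 0 := (hN t).ne'
  have hNd : HasDerivAt (fun u => S u + I1 u + I2 u)
      ((b1*(S t + I1 t + I2 t) + ((b - b1) - d)*S t + γ1*I1 t + γ2*I2 t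
        - l1*I1 t*S t/(S t + I1 t + I2 t) - l2*I2 t*S t/(S t + I1 t + I2 t))
      + (p*(l1*I1 t*S t/(S t + I1 t + I2 t) + l2*I2 t*S t/(S t + I1 t + I2 t))
        - (d + ε + γ1)*I1 t)
      + ((1-p)*(l1*I1 t*S t/(S t + I1 t + I2 t) + l2*I2 t*S t/(S t + I1 t + I2 t))
        - (d + ε + γ2)*I2 t)) t := ((hS t).add (hI1 t)).add (hI2 t)
  rw [nprime b1 b d ε l1 l2 γ1 γ2 p (S t) (I1 t) (I2 t)] at hNd
  refine ⟨?_, ?_, ?_⟩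
  · rw [aux1 b b1 d ε l1 l2 γ1 γ2 (S t) (I1 t) (I2 t) hNt]
    exact (hS t).div hNd hNt
  · rw [aux2 b b1 d ε l1 l2 γ1 p (S t) (I1 t) (I2 t) hNt]
    exact (hI1 t).div hNd hNt
  · rw [aux3 b b1 d ε l1 l2 γ2 p (S t) (I1 t) (I2 t) hNt]
    exact (hI2 t).div hNd hNt
end

section
/- The region D1 = {(i1, i2) ∈ ℝ² : i1 ≥ 0, i2 ≥ 0, i1 + i2 ≤ 1} is positively invariant for the planar system: every differentiable x : ℝ → ℝ² satisfying x'(t) = F(x(t)) for all t ≥ 0 with x(0) ∈ D1 satisfies x(t) ∈ D1 for all t ≥ 0. -/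
open Filter Topology Matrix

/-- Right-hand side of the planar system on `ℝ × ℝ` (coordinates `(i1, i2)`). -/
noncomputable def planarF (b b2 ε l1 l2 γ1 γ2 p q : ℝ) (x : ℝ × ℝ) : ℝ × ℝ :=
  ((p*l1 - b - ε - γ1)*x.1 + p*l2*x.2 + (x.1 + x.2)*((b2 + ε - p*l1)*x.1 - p*l2*x.2),
   q*l1*x.1 + (q*l2 - b - ε - γ2)*x.2 + (x.1 + x.2)*((b2 + ε - q*l2)*x.2 - q*l1*x.1))

/-!
With `s = i1 + i2` the field reads
`i1' = (p λ1 - b - ε - γ1 + s (b2 + ε - p λ1)) i1 + p λ2 i2 (1 - s)`, symmetrically for `i2`, and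
`s' = -γ1 i1 - γ2 i2 + (λ1 i1 + λ2 i2) (1 - s) - s (b1 + (b2 + ε) (1 - s))`.
So on each side of the triangle `D1` the field points inward up to an error bounded by
`K · violation`, where `violation` measures the distance to `D1` and `K` depends only on a bound
for the state. A trajectory is bounded on `[0, T]`, hence the upper right Dini derivative of
`violation ∘ x` is at most `K · violation ∘ x` there, and Gronwall's inequality keeps it at `0`.
-/

open Set

lemma eventually_lt_add_mul_sub_of_hasDerivWithinAt {g : ℝ → ℝ} {g' M r t : ℝ}
    (hg : HasDerivWithinAt g g' (Ici t) t) (hgM : g t ≤ M) (hr : 0 < r)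
    (hactive : g t = M → g' < r) :
    ∀ᶠ z in 𝓝[>] t, g z < M + r * (z - t) := by
  rcases hgM.lt_or_eq with hlt | heq
  · have hnear : ∀ᶠ z in 𝓝[>] t, g z < M :=
      ((hg.continuousWithinAt.mono Ioi_subset_Ici_self).tendsto).eventually_lt_const hlt
    filter_upwards [hnear, self_mem_nhdsWithin] with z hz hzt
    linarith [mul_pos hr (sub_pos.2 hzt)]
  · filter_upwards [hg.Ioi_of_Ici.limsup_slope_le' (lt_irrefl t) (hactive heq),
      self_mem_nhdsWithin] with z hz hzt
    rw [slope_def_field, div_lt_iff₀ (sub_pos.2 hzt)] at hz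
    linarith

lemma neg_mul_le_mul_abs_add_abs {a c m : ℝ} (hm : 0 ≤ m) (ha : -a ≤ m) (hc : -c ≤ m) :
    -(a * c) ≤ m * (|a| + |c|) := by
  rcases le_total 0 a with ha0 | ha0 <;> rcases le_total 0 c with hc0 | hc0 <;>
    simp only [abs_of_nonneg, abs_of_nonpos, *] <;> nlinarith

noncomputable def violation (y : ℝ × ℝ) : ℝ := max (max 0 (-y.1)) (max (-y.2) (y.1 + y.2 - 1))

lemma violation_nonneg (y : ℝ × ℝ) : 0 ≤ violation y :=
  (le_max_left _ _).trans (le_max_left _ _)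

lemma violation_nonpos_iff (y : ℝ × ℝ) :
    violation y ≤ 0 ↔ 0 ≤ y.1 ∧ 0 ≤ y.2 ∧ y.1 + y.2 ≤ 1 := by
  simp only [violation, max_le_iff, le_refl, true_and, neg_nonpos, sub_nonpos]

lemma continuous_violation : Continuous violation := by
  unfold violation; fun_prop

lemma violation_swap (y : ℝ × ℝ) : violation y.swap = violation y := by
  simp only [violation, Prod.fst_swap, Prod.snd_swap, add_comm y.2]
  exact max_max_max_comm _ _ _ _

section Bounds

variable (b b1 b2 ε l1 l2 γ1 γ2 p q R : ℝ)

lemma exists_neg_planarF_fst_le (hpl : 0 ≤ p * l2) :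
    ∃ K, ∀ y : ℝ × ℝ, |y.1| ≤ R → |y.2| ≤ R → -y.1 = violation y →
      -(planarF b b2 ε l1 l2 γ1 γ2 p q y).1 ≤ K * violation y := by
  set c0 := p * l1 - b - ε - γ1
  set c1 := b2 + ε - p * l1
  refine ⟨|c0| + 2 * R * |c1| + p * l2 * (3 * R + 1), fun y h1 h2 hactive => ?_⟩
  set m := violation y
  have hm : 0 ≤ m := violation_nonneg y
  have h2m : -y.2 ≤ m := (le_max_left _ _).trans (le_max_right _ _)
  have h3m : y.1 + y.2 - 1 ≤ m := (le_max_right _ _).trans (le_max_right _ _)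
  have hs : |y.1 + y.2| ≤ 2 * R := (abs_add_le _ _).trans (by linarith)
  have hcoef : c0 + (y.1 + y.2) * c1 ≤ |c0| + 2 * R * |c1| :=
    calc c0 + (y.1 + y.2) * c1 ≤ |c0| + |y.1 + y.2| * |c1| :=
          add_le_add (le_abs_self _) (abs_mul (y.1 + y.2) c1 ▸ le_abs_self _)
      _ ≤ |c0| + 2 * R * |c1| := by gcongr
  have hcross : -(y.2 * (1 - (y.1 + y.2))) ≤ m * (3 * R + 1) :=
    calc -(y.2 * (1 - (y.1 + y.2))) ≤ m * (|y.2| + |1 - (y.1 + y.2)|) :=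
          neg_mul_le_mul_abs_add_abs hm h2m (by linarith)
      _ ≤ m * (3 * R + 1) := by
          refine mul_le_mul_of_nonneg_left ?_ hm
          linarith [abs_sub (1 : ℝ) (y.1 + y.2), abs_one (α := ℝ)]
  have hsplit : -(planarF b b2 ε l1 l2 γ1 γ2 p q y).1
      = (c0 + (y.1 + y.2) * c1) * m + p * l2 * -(y.2 * (1 - (y.1 + y.2))) := by
    rw [← hactive]; simp only [planarF, c0, c1]; ring
  rw [hsplit]
  linarith [mul_le_mul_of_nonneg_right hcoef hm, mul_le_mul_of_nonneg_left hcross hpl]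

lemma planarF_snd_eq (y : ℝ × ℝ) :
    (planarF b b2 ε l1 l2 γ1 γ2 p q y).2 = (planarF b b2 ε l2 l1 γ2 γ1 q p y.swap).1 := by
  simp only [planarF, Prod.fst_swap, Prod.snd_swap]; ring

lemma exists_neg_planarF_snd_le (hql : 0 ≤ q * l1) :
    ∃ K, ∀ y : ℝ × ℝ, |y.1| ≤ R → |y.2| ≤ R → -y.2 = violation y →
      -(planarF b b2 ε l1 l2 γ1 γ2 p q y).2 ≤ K * violation y := by
  obtain ⟨K, hK⟩ := exists_neg_planarF_fst_le b b2 ε l2 l1 γ2 γ1 q p R hql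
  refine ⟨K, fun y h1 h2 hactive => ?_⟩
  rw [planarF_snd_eq, ← violation_swap]
  exact hK y.swap h2 h1 (hactive.trans (violation_swap y).symm)

lemma exists_planarF_fst_add_snd_le (hb1 : 0 ≤ b1) (hl1 : 0 ≤ l1) (hl2 : 0 ≤ l2)
    (hγ1 : 0 ≤ γ1) (hγ2 : 0 ≤ γ2) (hb2 : b2 = b - b1) (hpq : p + q = 1) :
    ∃ K, ∀ y : ℝ × ℝ, |y.1| ≤ R → |y.2| ≤ R → y.1 + y.2 - 1 = violation y →
      (planarF b b2 ε l1 l2 γ1 γ2 p q y).1 + (planarF b b2 ε l1 l2 γ1 γ2 p q y).2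
        ≤ K * violation y := by
  refine ⟨γ1 + γ2 + (l1 + l2) * R + 2 * R * |b2 + ε|, fun y h1 h2 hactive => ?_⟩
  set m := violation y
  set s := y.1 + y.2
  have hm : 0 ≤ m := violation_nonneg y
  have h1m : -y.1 ≤ m := (le_max_right _ _).trans (le_max_left _ _)
  have h2m : -y.2 ≤ m := (le_max_left _ _).trans (le_max_right _ _)
  obtain ⟨hy1, -⟩ := abs_le.1 h1
  obtain ⟨hy2, -⟩ := abs_le.1 h2
  have hlin : -(l1 * y.1 + l2 * y.2) ≤ (l1 + l2) * R := by nlinarith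
  have hquad : (b2 + ε) * s ≤ 2 * R * |b2 + ε| :=
    calc (b2 + ε) * s ≤ |b2 + ε| * |s| := abs_mul (b2 + ε) s ▸ le_abs_self _
      _ ≤ |b2 + ε| * (2 * R) := by gcongr; exact (abs_add_le _ _).trans (by linarith)
      _ = 2 * R * |b2 + ε| := by ring
  have hsplit : (planarF b b2 ε l1 l2 γ1 γ2 p q y).1 + (planarF b b2 ε l1 l2 γ1 γ2 p q y).2
      = γ1 * (-y.1) + γ2 * (-y.2) + -(l1 * y.1 + l2 * y.2) * m - b1 * s + (b2 + ε) * s * m := by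
    obtain rfl : q = 1 - p := by linarith
    obtain rfl : b = b1 + b2 := by linarith
    rw [← hactive]; simp only [planarF, s]; ring
  rw [hsplit]
  linarith [mul_le_mul_of_nonneg_left h1m hγ1, mul_le_mul_of_nonneg_left h2m hγ2,
    mul_le_mul_of_nonneg_right hlin hm, mul_le_mul_of_nonneg_right hquad hm,
    mul_nonneg hb1 (show 0 ≤ s by linarith)]

end Bounds

lemma eventually_violation_lt_add_mul_sub {x : ℝ → ℝ × ℝ} {v : ℝ × ℝ} {t K r : ℝ}
    (hx : HasDerivWithinAt x v (Ici t) t) (hK : 0 ≤ K) (hr : K * violation (x t) < r)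
    (h1 : -(x t).1 = violation (x t) → -v.1 ≤ K * violation (x t))
    (h2 : -(x t).2 = violation (x t) → -v.2 ≤ K * violation (x t))
    (h3 : (x t).1 + (x t).2 - 1 = violation (x t) → v.1 + v.2 ≤ K * violation (x t)) :
    ∀ᶠ z in 𝓝[>] t, violation (x z) < violation (x t) + r * (z - t) := by
  have hr0 : 0 < r := (mul_nonneg hK (violation_nonneg _)).trans_lt hr
  have hx1 := (hasFDerivAt_fst (𝕜 := ℝ) (p := x t)).comp_hasDerivWithinAt t hx
  have hx2 := (hasFDerivAt_snd (𝕜 := ℝ) (p := x t)).comp_hasDerivWithinAt t hx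
  have e0 := eventually_lt_add_mul_sub_of_hasDerivWithinAt (hasDerivWithinAt_const t _ 0)
    (violation_nonneg (x t)) hr0 fun _ => hr0
  have e1 := eventually_lt_add_mul_sub_of_hasDerivWithinAt hx1.neg
    ((le_max_right _ _).trans (le_max_left _ _)) hr0 fun h => (h1 h).trans_lt hr
  have e2 := eventually_lt_add_mul_sub_of_hasDerivWithinAt hx2.neg
    ((le_max_left _ _).trans (le_max_right _ _)) hr0 fun h => (h2 h).trans_lt hr
  have e3 := eventually_lt_add_mul_sub_of_hasDerivWithinAt ((hx1.add hx2).sub_const 1)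
    ((le_max_right _ _).trans (le_max_right _ _)) hr0 fun h => (h3 h).trans_lt hr
  filter_upwards [e0, e1, e2, e3] with z h0 h1 h2 h3
  exact max_lt (max_lt h0 h1) (max_lt h2 h3)

theorem violation_nonpos_of_hasDerivAt (F : ℝ × ℝ → ℝ × ℝ)
    (hF1 : ∀ R, ∃ K, ∀ y : ℝ × ℝ, |y.1| ≤ R → |y.2| ≤ R → -y.1 = violation y →
      -(F y).1 ≤ K * violation y)
    (hF2 : ∀ R, ∃ K, ∀ y : ℝ × ℝ, |y.1| ≤ R → |y.2| ≤ R → -y.2 = violation y →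
      -(F y).2 ≤ K * violation y)
    (hF3 : ∀ R, ∃ K, ∀ y : ℝ × ℝ, |y.1| ≤ R → |y.2| ≤ R → y.1 + y.2 - 1 = violation y →
      (F y).1 + (F y).2 ≤ K * violation y)
    {x : ℝ → ℝ × ℝ} (hx : ∀ t, 0 ≤ t → HasDerivAt x (F (x t)) t) (hx0 : violation (x 0) ≤ 0)
    {T : ℝ} (hT : 0 ≤ T) : violation (x T) ≤ 0 := by
  have hxc : ContinuousOn x (Icc 0 T) := fun t ht => (hx t ht.1).continuousAt.continuousWithinAt
  obtain ⟨R, hR⟩ := isCompact_Icc.exists_bound_of_continuousOn hxc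
  obtain ⟨K1, hK1⟩ := hF1 R
  obtain ⟨K2, hK2⟩ := hF2 R
  obtain ⟨K3, hK3⟩ := hF3 R
  set K := max 0 (max K1 (max K2 K3))
  have hK : ∀ {Ki}, Ki ≤ K → ∀ y, Ki * violation y ≤ K * violation y :=
    fun hKi y => mul_le_mul_of_nonneg_right hKi (violation_nonneg y)
  have hslope : ∀ t ∈ Ico 0 T, ∀ r, K * violation (x t) < r →
      ∃ᶠ z in 𝓝[>] t, (z - t)⁻¹ * (violation (x z) - violation (x t)) < r := by
    intro t ht r hr
    have hxt := hR t (Ico_subset_Icc_self ht)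
    have h1 : |(x t).1| ≤ R := (norm_fst_le (x t)).trans hxt
    have h2 : |(x t).2| ≤ R := (norm_snd_le (x t)).trans hxt
    refine Eventually.frequently ?_
    filter_upwards [eventually_violation_lt_add_mul_sub (hx t ht.1).hasDerivWithinAt
      (le_max_left _ _) hr
      (fun h => (hK1 _ h1 h2 h).trans (hK (by simp [K]) _))
      (fun h => (hK2 _ h1 h2 h).trans (hK (by simp [K]) _))
      (fun h => (hK3 _ h1 h2 h).trans (hK (by simp [K]) _)), self_mem_nhdsWithin]
      with z hz hzt
    rw [← div_eq_inv_mul, div_lt_iff₀ (sub_pos.2 hzt)]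
    linarith
  simpa only [gronwallBound_ε0_δ0, Function.comp_apply] using
    le_gronwallBound_of_liminf_deriv_right_le (continuous_violation.comp_continuousOn hxc) hslope
      hx0 (fun _ _ => (add_zero _).ge) T ⟨hT, le_rfl⟩

theorem stmt4_general (b b1 b2 ε l1 l2 γ1 γ2 p q : ℝ)
    (hb1 : 0 < b1) (hl1 : 0 < l1) (hl2 : 0 < l2)
    (hγ1 : 0 < γ1) (hγ2 : 0 < γ2) (hp : 0 < p) (hq : 0 < q)
    (hb2 : b2 = b - b1) (hpq : p + q = 1) :
    ∀ x : ℝ → ℝ × ℝ,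
      (∀ t : ℝ, 0 ≤ t → HasDerivAt x (planarF b b2 ε l1 l2 γ1 γ2 p q (x t)) t) →
      (0 ≤ (x 0).1 ∧ 0 ≤ (x 0).2 ∧ (x 0).1 + (x 0).2 ≤ 1) →
      ∀ t : ℝ, 0 ≤ t → 0 ≤ (x t).1 ∧ 0 ≤ (x t).2 ∧ (x t).1 + (x t).2 ≤ 1 := by
  intro x hx hx0 t ht
  rw [← violation_nonpos_iff] at hx0 ⊢
  exact violation_nonpos_of_hasDerivAt _
    (fun R => exists_neg_planarF_fst_le b b2 ε l1 l2 γ1 γ2 p q R (by positivity))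
    (fun R => exists_neg_planarF_snd_le b b2 ε l1 l2 γ1 γ2 p q R (by positivity))
    (fun R => exists_planarF_fst_add_snd_le b b1 b2 ε l1 l2 γ1 γ2 p q R hb1.le hl1.le hl2.le
      hγ1.le hγ2.le hb2 hpq)
    hx hx0 ht

theorem stmt4 (b b1 b2 d ε l1 l2 γ1 γ2 p q : ℝ)
    (hb1 : 0 < b1) (hd : 0 < d) (hε : 0 < ε) (hl1 : 0 < l1) (hl2 : 0 < l2)
    (hγ1 : 0 < γ1) (hγ2 : 0 < γ2) (hp : 0 < p) (hq : 0 < q)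
    (hb : b1 ≤ b) (hb2 : b2 = b - b1) (hpq : p + q = 1) :
    ∀ x : ℝ → ℝ × ℝ,
      (∀ t : ℝ, 0 ≤ t → HasDerivAt x (planarF b b2 ε l1 l2 γ1 γ2 p q (x t)) t) →
      (0 ≤ (x 0).1 ∧ 0 ≤ (x 0).2 ∧ (x 0).1 + (x 0).2 ≤ 1) →
      ∀ t : ℝ, 0 ≤ t → 0 ≤ (x t).1 ∧ 0 ≤ (x t).2 ∧ (x t).1 + (x t).2 ≤ 1 :=
  stmt4_general b b1 b2 ε l1 l2 γ1 γ2 p q hb1 hl1 hl2 hγ1 hγ2 hp hq hb2 hpq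
end

section
/- If R0 < 1, then the linearization matrix C of the planar system at the origin satisfies det C > 0 and trace C < 0; consequently every (complex) eigenvalue of C has negative real part, i.e., the origin is a sink for the planar system. -/
open Filter Topology Matrix

/-- Linearization matrix of the planar system at the origin. -/
noncomputable def linC (b ε l1 l2 γ1 γ2 p q : ℝ) : Matrix (Fin 2) (Fin 2) ℝ :=
  !![p*l1 - b - ε - γ1, p*l2;
     q*l1, q*l2 - b - ε - γ2]

lemma quad_root_neg (a c e f : ℝ) (ht : a + f < 0) (hdet : 0 < a*f - c*e) (μ : ℂ)
    (h : (μ - a) * (μ - f) - (c:ℂ)*e = 0) : μ.re < 0 := by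
  have hre := congrArg Complex.re h
  have him := congrArg Complex.im h
  simp [Complex.mul_re, Complex.mul_im] at hre him
  set x := μ.re
  set y := μ.im
  rcases eq_or_ne y 0 with hy | hy
  · rw [hy] at hre
    by_contra hx
    push_neg at hx
    nlinarith
  · have h2 : 2*x = a + f := by
      have : y * (2*x - (a + f)) = 0 := by nlinarith [him]
      have := (mul_eq_zero.mp this).resolve_left hy
      linarith
    linarith

theorem stmt8 (b b1 b2 d ε l1 l2 γ1 γ2 p q : ℝ)
    (hb1 : 0 < b1) (hd : 0 < d) (hε : 0 < ε) (hl1 : 0 < l1) (hl2 : 0 < l2)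
    (hγ1 : 0 < γ1) (hγ2 : 0 < γ2) (hp : 0 < p) (hq : 0 < q)
    (hb : b1 ≤ b) (hb2 : b2 = b - b1) (hpq : p + q = 1)
    (hR0 : p*l1/(b + ε + γ1) + q*l2/(b + ε + γ2) < 1) :
    0 < (linC b ε l1 l2 γ1 γ2 p q).det ∧ (linC b ε l1 l2 γ1 γ2 p q).trace < 0 ∧
    ∀ μ ∈ spectrum ℂ ((linC b ε l1 l2 γ1 γ2 p q).map Complex.ofReal), μ.re < 0 := by
  have hA1 : 0 < b + ε + γ1 := by linarith
  have hA2 : 0 < b + ε + γ2 := by linarith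
  rw [div_add_div _ _ hA1.ne' hA2.ne', div_lt_one (by positivity)] at hR0
  have hkey : p*l1*(b + ε + γ2) + q*l2*(b + ε + γ1) < (b + ε + γ1)*(b + ε + γ2) := by
    nlinarith
  have h1 : p*l1 < b + ε + γ1 := by nlinarith [mul_pos (mul_pos hq hl2) hA1]
  have h2 : q*l2 < b + ε + γ2 := by nlinarith [mul_pos (mul_pos hp hl1) hA2]
  have hdet : 0 < (linC b ε l1 l2 γ1 γ2 p q).det := by
    simp [linC, Matrix.det_fin_two]
    nlinarith
  have htr : (linC b ε l1 l2 γ1 γ2 p q).trace < 0 := by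
    simp [linC, Matrix.trace_fin_two]
    linarith
  refine ⟨hdet, htr, ?_⟩
  intro μ hμ
  rw [spectrum.mem_iff] at hμ
  have hdet0 : ((algebraMap ℂ (Matrix (Fin 2) (Fin 2) ℂ) μ) -
      (linC b ε l1 l2 γ1 γ2 p q).map Complex.ofReal).det = 0 := by
    by_contra h
    exact hμ ((Matrix.isUnit_iff_isUnit_det _).mpr (isUnit_iff_ne_zero.mpr h))
  have heq : (μ - ((p*l1 - b - ε - γ1 : ℝ) : ℂ)) * (μ - ((q*l2 - b - ε - γ2 : ℝ) : ℂ))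
      - ((p*l2 : ℝ) : ℂ) * ((q*l1 : ℝ) : ℂ) = 0 := by
    rw [← hdet0]
    simp [linC, Matrix.det_fin_two, Matrix.algebraMap_matrix_apply]
  have hdet' : 0 < (p*l1 - b - ε - γ1)*(q*l2 - b - ε - γ2) - (p*l2)*(q*l1) := by
    nlinarith
  exact quad_root_neg _ _ _ _ (by linarith) hdet' μ heq
end

section
/- If R0 > 1, then the linearization matrix C of the planar system at the origin satisfies det C < 0; consequently C has two real eigenvalues, one strictly positive and one strictly negative, i.e., the origin is a saddle point for the planar system. -/
open Filter Topology Matrix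

/-- Spectrum of a 2×2 complex matrix with trace `t` and determinant `Δ`. -/
lemma spectrum_fin_two (a b c d : ℂ) (μ₁ μ₂ : ℂ)
    (hsum : μ₁ + μ₂ = a + d) (hprod : μ₁ * μ₂ = a * d - b * c) :
    spectrum ℂ (!![a, b; c, d]) = {μ₁, μ₂} := by
  ext μ
  rw [spectrum.mem_iff]
  have hdet : (algebraMap ℂ (Matrix (Fin 2) (Fin 2) ℂ) μ - !![a, b; c, d]).det
      = (μ - μ₁) * (μ - μ₂) := by
    rw [Matrix.algebraMap_eq_diagonal]
    have : (Matrix.diagonal (algebraMap ℂ (Fin 2 → ℂ) μ) - !![a, b; c, d]) =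
        !![μ - a, -b; -c, μ - d] := by
      ext i j
      fin_cases i <;> fin_cases j <;>
        simp [Matrix.diagonal, Pi.algebraMap_apply]
    rw [this, Matrix.det_fin_two_of]
    have : μ^2 - (μ₁ + μ₂) * μ + μ₁ * μ₂ = μ^2 - (a + d) * μ + (a*d - b*c) := by
      rw [hsum, hprod]
    linear_combination -this
  rw [Matrix.isUnit_iff_isUnit_det, hdet, isUnit_iff_ne_zero, not_ne_iff, mul_eq_zero,
    sub_eq_zero, sub_eq_zero]
  simp

theorem stmt9 (b b1 b2 d ε l1 l2 γ1 γ2 p q : ℝ)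
    (hb1 : 0 < b1) (hd : 0 < d) (hε : 0 < ε) (hl1 : 0 < l1) (hl2 : 0 < l2)
    (hγ1 : 0 < γ1) (hγ2 : 0 < γ2) (hp : 0 < p) (hq : 0 < q)
    (hb : b1 ≤ b) (hb2 : b2 = b - b1) (hpq : p + q = 1)
    (hR0 : 1 < p*l1/(b + ε + γ1) + q*l2/(b + ε + γ2)) :
    (linC b ε l1 l2 γ1 γ2 p q).det < 0 ∧
    ∃ μ₁ μ₂ : ℝ, 0 < μ₁ ∧ μ₂ < 0 ∧
      spectrum ℂ ((linC b ε l1 l2 γ1 γ2 p q).map Complex.ofReal) = {(μ₁ : ℂ), (μ₂ : ℂ)} := by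
  have hbpos : 0 < b := lt_of_lt_of_le hb1 hb
  have hA1 : 0 < b + ε + γ1 := by linarith
  have hA2 : 0 < b + ε + γ2 := by linarith
  -- the determinant is negative
  have key : (b + ε + γ1) * (b + ε + γ2) < p*l1*(b + ε + γ2) + q*l2*(b + ε + γ1) := by
    rw [div_add_div _ _ hA1.ne' hA2.ne', lt_div_iff₀ (by positivity)] at hR0
    linarith
  have hD : (p*l1 - b - ε - γ1) * (q*l2 - b - ε - γ2) - p*l2 * (q*l1) < 0 := by
    nlinarith [key]
  have hdet : (linC b ε l1 l2 γ1 γ2 p q).det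
      = (p*l1 - b - ε - γ1) * (q*l2 - b - ε - γ2) - p*l2 * (q*l1) := by
    rw [linC, Matrix.det_fin_two_of]
  refine ⟨by rw [hdet]; exact hD, ?_⟩
  -- eigenvalues
  set t := (p*l1 - b - ε - γ1) + (q*l2 - b - ε - γ2) with ht
  set D := (p*l1 - b - ε - γ1) * (q*l2 - b - ε - γ2) - p*l2 * (q*l1) with hDdef
  set s := Real.sqrt (t^2 - 4*D) with hs
  have hs2 : s^2 = t^2 - 4*D := Real.sq_sqrt (by nlinarith)
  have hst : |t| < s := by
    have h := Real.sqrt_lt_sqrt (sq_nonneg t) (by nlinarith : t^2 < t^2 - 4*D)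
    rwa [Real.sqrt_sq_eq_abs] at h
  refine ⟨(t + s)/2, (t - s)/2, ?_, ?_, ?_⟩
  · have := neg_abs_le t; linarith
  · have := le_abs_self t; linarith
  · have hmap : (linC b ε l1 l2 γ1 γ2 p q).map Complex.ofReal
        = !![((p*l1 - b - ε - γ1 : ℝ) : ℂ), ((p*l2 : ℝ) : ℂ);
             ((q*l1 : ℝ) : ℂ), ((q*l2 - b - ε - γ2 : ℝ) : ℂ)] := by
      ext i j
      fin_cases i <;> fin_cases j <;> simp [linC]
    rw [hmap]
    apply spectrum_fin_two
    · have h : (t + s)/2 + (t - s)/2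
          = (p*l1 - b - ε - γ1) + (q*l2 - b - ε - γ2) := by rw [ht]; ring
      have h2 := congrArg Complex.ofReal h
      push_cast at h2 ⊢
      linear_combination h2
    · have h : (t + s)/2 * ((t - s)/2)
          = (p*l1 - b - ε - γ1) * (q*l2 - b - ε - γ2) - p*l2 * (q*l1) := by
        linear_combination (-1/4 : ℝ)*hs2 + hDdef
      have h2 := congrArg Complex.ofReal h
      push_cast at h2 ⊢
      linear_combination h2
end

section
/- At any equilibrium of the planar system in the interior of D1, the trace of the Jacobian of F is negative: if (i1, i2) ∈ ℝ² satisfies i1 > 0, i2 > 0, i1 + i2 < 1 and F(i1, i2) = (0, 0), then the trace of the total derivative (Jacobian matrix) of F at (i1, i2) is strictly negative. -/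
open Filter Topology Matrix

/-- Jacobian matrix of the planar vector field `planarF` at the point `x`. -/
noncomputable def planarJac (b b2 ε l1 l2 γ1 γ2 p q : ℝ) (x : ℝ × ℝ) :
    Matrix (Fin 2) (Fin 2) ℝ :=
  !![(p*l1 - b - ε - γ1) + ((b2 + ε - p*l1)*x.1 - p*l2*x.2) + (x.1 + x.2)*(b2 + ε - p*l1),
     p*l2 + ((b2 + ε - p*l1)*x.1 - p*l2*x.2) - (x.1 + x.2)*(p*l2);
     q*l1 + ((b2 + ε - q*l2)*x.2 - q*l1*x.1) - (x.1 + x.2)*(q*l1),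
     (q*l2 - b - ε - γ2) + ((b2 + ε - q*l2)*x.2 - q*l1*x.1) + (x.1 + x.2)*(b2 + ε - q*l2)]

theorem stmt11 (b b1 b2 d ε l1 l2 γ1 γ2 p q : ℝ)
    (hb1 : 0 < b1) (hd : 0 < d) (hε : 0 < ε) (hl1 : 0 < l1) (hl2 : 0 < l2)
    (hγ1 : 0 < γ1) (hγ2 : 0 < γ2) (hp : 0 < p) (hq : 0 < q)
    (hb : b1 ≤ b) (hb2 : b2 = b - b1) (hpq : p + q = 1) :
    ∀ x : ℝ × ℝ, 0 < x.1 → 0 < x.2 → x.1 + x.2 < 1 →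
      planarF b b2 ε l1 l2 γ1 γ2 p q x = 0 →
      (planarJac b b2 ε l1 l2 γ1 γ2 p q x).trace < 0 := by
  rintro ⟨i1, i2⟩ h1pos h2pos hsum hF
  simp only [planarF, Prod.ext_iff, Prod.fst_zero, Prod.snd_zero] at hF
  obtain ⟨h1, h2⟩ := hF
  have hq' : q = 1 - p := by linarith
  subst hb2 hq'
  rw [Matrix.trace_fin_two]
  simp only [planarJac, Matrix.cons_val', Matrix.cons_val_zero, Matrix.cons_val_one,
    Matrix.head_cons, Matrix.empty_val', Matrix.cons_val_fin_one, Matrix.head_fin_const,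
    Matrix.of_apply] at *
  set tr : ℝ := ((p*l1 - b - ε - γ1) + (((b - b1) + ε - p*l1)*i1 - p*l2*i2)
      + (i1 + i2)*((b - b1) + ε - p*l1))
    + (((1-p)*l2 - b - ε - γ2) + (((b - b1) + ε - (1-p)*l2)*i2 - (1-p)*l1*i1)
      + (i1 + i2)*((b - b1) + ε - (1-p)*l2)) with htr
  have key : (1 - (i1 + i2)) * i1 * i2 * tr =
      -((1 - (i1 + i2))^2 * (p*l2*i2^2 + (1-p)*l1*i1^2)
        + i1*i2*((i1 + i2)*b1 + γ1*i1 + γ2*i2)) := by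
    rw [htr]
    linear_combination ((1 - (i1 + i2))*i2 - i1*i2) * h1 + ((1 - (i1 + i2))*i1 - i1*i2) * h2
  have hs : 0 < 1 - (i1 + i2) := by linarith
  have hpos : 0 < (1 - (i1 + i2)) * i1 * i2 := by positivity
  have hP : 0 < (1 - (i1 + i2)) ^ 2 * (p*l2*i2^2 + (1-p)*l1*i1^2)
      + i1*i2*((i1 + i2)*b1 + γ1*i1 + γ2*i2) := by
    have ha : 0 < p*l2*i2^2 + (1-p)*l1*i1^2 :=
      add_pos (by positivity) (mul_pos (mul_pos hq hl1) (by positivity))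
    have hbb : 0 < (i1 + i2)*b1 + γ1*i1 + γ2*i2 := by
      have := mul_pos (add_pos h1pos h2pos) hb1
      nlinarith [mul_pos hγ1 h1pos, mul_pos hγ2 h2pos]
    exact add_pos (mul_pos (by positivity) ha) (mul_pos (mul_pos h1pos h2pos) hbb)
  have hneg : (1 - (i1 + i2)) * i1 * i2 * tr < 0 := by rw [key]; linarith
  by_contra hc
  push_neg at hc
  nlinarith [mul_nonneg hpos.le hc]
end

section
/- The planar system has no source in the interior of D1: if (i1, i2) ∈ ℝ² satisfies i1 > 0, i2 > 0, i1 + i2 < 1 and F(i1, i2) = (0, 0), then it is not the case that both (complex) eigenvalues of the Jacobian matrix of F at (i1, i2) have strictly positive real part. -/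
open Filter Topology Matrix

/-- If `μ` is a root of the characteristic polynomial of the (complexified) `2×2`
matrix `!![A,B;C,D]`, then `μ` belongs to its spectrum. -/
lemma memspec_aux (A B C D : ℝ) (μ : ℂ)
    (h : (μ - A) * (μ - D) - B * C = 0) :
    μ ∈ spectrum ℂ ((!![A, B; C, D]).map Complex.ofReal) := by
  rw [spectrum.mem_iff]
  intro hu
  rw [Matrix.isUnit_iff_isUnit_det] at hu
  have hdet : (algebraMap ℂ (Matrix (Fin 2) (Fin 2) ℂ) μ - (!![A, B; C, D]).map Complex.ofReal).det
      = (μ - A) * (μ - D) - B * C := by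
    have hm : algebraMap ℂ (Matrix (Fin 2) (Fin 2) ℂ) μ - (!![A, B; C, D]).map Complex.ofReal
        = !![μ - A, -B; -C, μ - D] := by
      ext i j
      fin_cases i <;> fin_cases j <;>
        simp [Matrix.algebraMap_matrix_apply, Matrix.map_apply]
    rw [hm, Matrix.det_fin_two_of]
    ring
  rw [hdet, h] at hu
  exact hu.ne_zero rfl

/-- A real `2×2` matrix with negative trace cannot have both (complex) eigenvalues
with strictly positive real part. -/
lemma no_source_aux (A B C D : ℝ) (hT : A + D < 0) :
    ¬ (∀ μ ∈ spectrum ℂ ((!![A, B; C, D]).map Complex.ofReal), 0 < μ.re) := by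
  intro hall
  obtain ⟨w, hw⟩ := IsAlgClosed.exists_pow_nat_eq (((A : ℂ) + D)^2 - 4*((A : ℂ)*D - B*C))
    (n := 2) (by norm_num)
  have h1 := hall ((((A : ℂ) + D) + w)/2) (memspec_aux A B C D _ (by linear_combination hw/4))
  have h2 := hall ((((A : ℂ) + D) - w)/2) (memspec_aux A B C D _ (by linear_combination hw/4))
  have hsum : ((((A : ℂ) + D) + w)/2).re + ((((A : ℂ) + D) - w)/2).re = A + D := by
    rw [← Complex.add_re]
    have : ((((A : ℂ) + D) + w)/2) + ((((A : ℂ) + D) - w)/2) = ((A + D : ℝ) : ℂ) := by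
      push_cast; ring
    rw [this, Complex.ofReal_re]
  linarith

theorem stmt12 (b b1 b2 d ε l1 l2 γ1 γ2 p q : ℝ)
    (hb1 : 0 < b1) (hd : 0 < d) (hε : 0 < ε) (hl1 : 0 < l1) (hl2 : 0 < l2)
    (hγ1 : 0 < γ1) (hγ2 : 0 < γ2) (hp : 0 < p) (hq : 0 < q)
    (hb : b1 ≤ b) (hb2 : b2 = b - b1) (hpq : p + q = 1) :
    ∀ x : ℝ × ℝ, 0 < x.1 → 0 < x.2 → x.1 + x.2 < 1 →
      planarF b b2 ε l1 l2 γ1 γ2 p q x = 0 →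
      ¬ (∀ μ ∈ spectrum ℂ ((planarJac b b2 ε l1 l2 γ1 γ2 p q x).map Complex.ofReal), 0 < μ.re) := by
  subst hb2
  intro x hx1 hx2 hs hF
  rw [planarF, Prod.ext_iff] at hF
  obtain ⟨hF1, hF2⟩ := hF
  simp only [Prod.fst_zero, Prod.snd_zero] at hF1 hF2
  rw [planarJac]
  apply no_source_aux
  -- the trace is negative: both diagonal entries are negative at an interior equilibrium
  have h1s : (0:ℝ) < 1 - x.1 - x.2 := by linarith
  have hpos1 : (0:ℝ) < (1 - x.1 - x.2) * x.1 := mul_pos h1s hx1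
  have hpos2 : (0:ℝ) < (1 - x.1 - x.2) * x.2 := mul_pos h1s hx2
  have ha11 : (p*l1 - b - ε - γ1) + (((b - b1) + ε - p*l1)*x.1 - p*l2*x.2)
      + (x.1 + x.2)*((b - b1) + ε - p*l1) < 0 := by
    have h1 : (1 - x.1 - x.2) * x.1 *
        ((p*l1 - b - ε - γ1) + (((b - b1) + ε - p*l1)*x.1 - p*l2*x.2)
          + (x.1 + x.2)*((b - b1) + ε - p*l1))
        = -(1 - x.1 - x.2)^2*(p*l2)*x.2 - (b1+γ1)*x.1^2 := by
      linear_combination (1 - 2*x.1 - x.2) * hF1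
    by_contra hc
    push_neg at hc
    have hnn := mul_nonneg hpos1.le hc
    rw [h1] at hnn
    nlinarith [mul_pos (pow_pos h1s 2) (mul_pos (mul_pos hp hl2) hx2),
      mul_pos (mul_pos hb1 hx1) hx1, mul_pos (mul_pos hγ1 hx1) hx1]
  have ha22 : (q*l2 - b - ε - γ2) + (((b - b1) + ε - q*l2)*x.2 - q*l1*x.1)
      + (x.1 + x.2)*((b - b1) + ε - q*l2) < 0 := by
    have h2 : (1 - x.1 - x.2) * x.2 *
        ((q*l2 - b - ε - γ2) + (((b - b1) + ε - q*l2)*x.2 - q*l1*x.1)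
          + (x.1 + x.2)*((b - b1) + ε - q*l2))
        = -(1 - x.1 - x.2)^2*(q*l1)*x.1 - (b1+γ2)*x.2^2 := by
      linear_combination (1 - x.1 - 2*x.2) * hF2
    by_contra hc
    push_neg at hc
    have hnn := mul_nonneg hpos2.le hc
    rw [h2] at hnn
    nlinarith [mul_pos (pow_pos h1s 2) (mul_pos (mul_pos hq hl1) hx1),
      mul_pos (mul_pos hb1 hx2) hx2, mul_pos (mul_pos hγ2 hx2) hx2]
  linarith
end

section
/- Every nondegenerate equilibrium of the planar system in the interior of D1 is hyperbolic: if (i1, i2) ∈ ℝ² satisfies i1 > 0, i2 > 0, i1 + i2 < 1, F(i1, i2) = (0, 0), and the Jacobian matrix of F at (i1, i2) has nonzero determinant, then every (complex) eigenvalue of this Jacobian matrix has nonzero real part. -/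
open Filter Topology Matrix

/-- A real 2×2 matrix with nonzero trace and nonzero determinant has no purely
imaginary complex eigenvalues. -/
lemma aux_hyp2 (A : Matrix (Fin 2) (Fin 2) ℝ) (htr : A 0 0 + A 1 1 ≠ 0)
    (hdet : A.det ≠ 0) :
    ∀ μ ∈ spectrum ℂ (A.map Complex.ofReal), μ.re ≠ 0 := by
  intro μ hμ hre
  rw [spectrum.mem_iff, Matrix.isUnit_iff_isUnit_det, isUnit_iff_ne_zero, ne_eq, not_not,
    Matrix.det_fin_two] at hμ
  simp only [Matrix.sub_apply, Matrix.map_apply, Matrix.algebraMap_matrix_apply,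
    if_pos rfl, if_true, Fin.zero_eq_one_iff, Fin.one_eq_zero_iff, Nat.succ_ne_self,
    if_false, Nat.reduceEqDiff, ite_false, algebraMap.coe_inj, Algebra.algebraMap_self,
    RingHom.id_apply] at hμ
  set a := A 0 0; set b := A 0 1; set c := A 1 0; set d := A 1 1
  have hIm : ((μ - (a:ℂ)) * (μ - (d:ℂ)) - (0 - (b:ℂ)) * (0 - (c:ℂ))).im = 0 := by
    rw [hμ]; simp
  have hRe : ((μ - (a:ℂ)) * (μ - (d:ℂ)) - (0 - (b:ℂ)) * (0 - (c:ℂ))).re = 0 := by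
    rw [hμ]; simp
  simp only [Complex.sub_im, Complex.mul_im, Complex.sub_re, Complex.mul_re,
    Complex.ofReal_re, Complex.ofReal_im, Complex.zero_re, Complex.zero_im, hre] at hIm hRe
  have hprod : (a + d) * μ.im = 0 := by linarith [hIm]
  have hy : μ.im = 0 := by
    rcases mul_eq_zero.mp hprod with h | h
    · exact absurd h htr
    · exact h
  rw [hy] at hRe
  have hdet' : a * d - b * c = 0 := by linear_combination hRe
  exact hdet (by rw [Matrix.det_fin_two]; exact hdet')

theorem stmt13 (b b1 b2 d ε l1 l2 γ1 γ2 p q : ℝ)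
    (hb1 : 0 < b1) (hd : 0 < d) (hε : 0 < ε) (hl1 : 0 < l1) (hl2 : 0 < l2)
    (hγ1 : 0 < γ1) (hγ2 : 0 < γ2) (hp : 0 < p) (hq : 0 < q)
    (hb : b1 ≤ b) (hb2 : b2 = b - b1) (hpq : p + q = 1) :
    ∀ x : ℝ × ℝ, 0 < x.1 → 0 < x.2 → x.1 + x.2 < 1 →
      planarF b b2 ε l1 l2 γ1 γ2 p q x = 0 →
      (planarJac b b2 ε l1 l2 γ1 γ2 p q x).det ≠ 0 →
      ∀ μ ∈ spectrum ℂ ((planarJac b b2 ε l1 l2 γ1 γ2 p q x).map Complex.ofReal), μ.re ≠ 0 := by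
  intro x hx1 hx2 hs hF hdet
  apply aux_hyp2 _ _ hdet
  -- trace is negative, hence nonzero
  subst hb2
  have hq' : q = 1 - p := by linarith
  subst hq'
  rw [Prod.ext_iff] at hF
  obtain ⟨hF1, hF2⟩ := hF
  simp only [planarF, Prod.fst_zero, Prod.snd_zero] at hF1 hF2
  have e00 : planarJac b (b - b1) ε l1 l2 γ1 γ2 p (1 - p) x 0 0 =
      (p*l1 - b - ε - γ1) + (((b - b1) + ε - p*l1)*x.1 - p*l2*x.2)
        + (x.1 + x.2)*((b - b1) + ε - p*l1) := by
    simp [planarJac]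
  have e11 : planarJac b (b - b1) ε l1 l2 γ1 γ2 p (1 - p) x 1 1 =
      ((1 - p)*l2 - b - ε - γ2) + (((b - b1) + ε - (1 - p)*l2)*x.2 - (1 - p)*l1*x.1)
        + (x.1 + x.2)*((b - b1) + ε - (1 - p)*l2) := by
    simp [planarJac]
  rw [e00, e11]
  set T : ℝ := ((p*l1 - b - ε - γ1) + (((b - b1) + ε - p*l1)*x.1 - p*l2*x.2)
        + (x.1 + x.2)*((b - b1) + ε - p*l1))
      + (((1 - p)*l2 - b - ε - γ2) + (((b - b1) + ε - (1 - p)*l2)*x.2 - (1 - p)*l1*x.1)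
        + (x.1 + x.2)*((b - b1) + ε - (1 - p)*l2)) with hT
  have key : (1 - (x.1 + x.2)) * T * x.1 * x.2 =
      -((x.1+x.2)*b1*x.1*x.2) - (γ1*x.1+γ2*x.2)*x.1*x.2
        - (1-(x.1+x.2))^2*(p*l2*x.2^2 + (1-p)*l1*x.1^2) := by
    rw [hT]
    linear_combination ((1-(x.1+x.2))*x.2 - x.1*x.2) * hF1 + ((1-(x.1+x.2))*x.1 - x.1*x.2) * hF2
  have hA : 0 < (x.1+x.2)*b1*x.1*x.2 :=
    mul_pos (mul_pos (mul_pos (by linarith) hb1) hx1) hx2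
  have hB : 0 ≤ (γ1*x.1+γ2*x.2)*x.1*x.2 := by positivity
  have hC : 0 ≤ (1-(x.1+x.2))^2*(p*l2*x.2^2 + (1-p)*l1*x.1^2) := by
    have h1p : 0 ≤ 1 - p := by linarith
    positivity
  have hTneg : T < 0 := by
    by_contra h
    push_neg at h
    have h0 : 0 ≤ (1 - (x.1 + x.2)) * T * x.1 * x.2 :=
      mul_nonneg (mul_nonneg (mul_nonneg (by linarith) h) hx1.le) hx2.le
    linarith [key]
  exact ne_of_lt hTneg
end

section
/- Any two equilibria of the planar system with strictly positive coordinates are collinear with the origin: there exists a real constant c (depending only on the parameters) such that every (i1, i2) with i1 > 0, i2 > 0 and F(i1, i2) = (0, 0) satisfies q·λ1·(b1 + γ1)·i1² + c·i1·i2 − p·λ2·(b1 + γ2)·i2² = 0; in particular, if (a1, a2) and (a1', a2') are two such equilibria then a1·a2' = a2·a1'. -/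
open Filter Topology Matrix

theorem stmt14 (b b1 b2 d ε l1 l2 γ1 γ2 p q : ℝ)
    (hb1 : 0 < b1) (hd : 0 < d) (hε : 0 < ε) (hl1 : 0 < l1) (hl2 : 0 < l2)
    (hγ1 : 0 < γ1) (hγ2 : 0 < γ2) (hp : 0 < p) (hq : 0 < q)
    (hb : b1 ≤ b) (hb2 : b2 = b - b1) (hpq : p + q = 1) :
    (∃ c : ℝ, ∀ i1 i2 : ℝ, 0 < i1 → 0 < i2 →
      planarF b b2 ε l1 l2 γ1 γ2 p q (i1, i2) = 0 →
      q*l1*(b1 + γ1)*i1^2 + c*i1*i2 - p*l2*(b1 + γ2)*i2^2 = 0) ∧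
    (∀ a1 a2 c1 c2 : ℝ, 0 < a1 → 0 < a2 → 0 < c1 → 0 < c2 →
      planarF b b2 ε l1 l2 γ1 γ2 p q (a1, a2) = 0 → planarF b b2 ε l1 l2 γ1 γ2 p q (c1, c2) = 0 →
      a1*c2 = a2*c1) := by
  subst hb2
  set c : ℝ := (p*l1 - b - ε - γ1)*((b - b1) + ε - q*l2)
      - (q*l2 - b - ε - γ2)*((b - b1) + ε - p*l1) with hc
  have key : ∀ i1 i2 : ℝ,
      planarF b (b - b1) ε l1 l2 γ1 γ2 p q (i1, i2) = 0 →
      q*l1*(b1 + γ1)*i1^2 + c*i1*i2 - p*l2*(b1 + γ2)*i2^2 = 0 := by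
    intro i1 i2 heq
    rw [Prod.ext_iff] at heq
    obtain ⟨h1, h2⟩ := heq
    simp only [planarF, Prod.fst_zero, Prod.snd_zero] at h1 h2
    linear_combination (((b - b1) + ε - q*l2)*i2 - q*l1*i1) * h1
      - (((b - b1) + ε - p*l1)*i1 - p*l2*i2) * h2
  refine ⟨⟨c, fun i1 i2 _ _ h => key i1 i2 h⟩, ?_⟩
  intro a1 a2 c1 c2 ha1 ha2 hc1 hc2 hA hC
  have hQa := key a1 a2 hA
  have hQc := key c1 c2 hC
  set α : ℝ := q*l1*(b1 + γ1) with hα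
  set β : ℝ := p*l2*(b1 + γ2) with hβ
  have hαpos : 0 < α := by positivity
  have hβpos : 0 < β := by positivity
  set F : ℝ := α*(a1*c2 + c1*a2) + c*a2*c2 with hF
  have hmul : a1 * F = α*a1*c1*a2 + β*a2^2*c2 := by
    rw [hF]; linear_combination c2 * hQa
  have hFpos : 0 < F := by
    have h1 : 0 < a1 * F := by
      rw [hmul]; positivity
    nlinarith [h1, ha1]
  have hfac : (a1*c2 - a2*c1) * F = 0 := by
    rw [hF]; linear_combination c2^2 * hQa - a2^2 * hQc
  have := mul_eq_zero.mp hfac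
  rcases this with h | h
  · linarith
  · exact absurd h (ne_of_gt hFpos)
end

section
/- The planar system has at most one equilibrium in the interior of D1, and any such equilibrium is hyperbolic: there is at most one point (i1, i2) with i1 > 0, i2 > 0, i1 + i2 < 1 and F(i1, i2) = (0, 0), and at any such point every (complex) eigenvalue of the Jacobian matrix of F has nonzero real part. -/
open Filter Topology Matrix

/-- The two equilibrium equations in product form. -/
lemma planar_equil (b b1 ε l1 l2 γ1 γ2 p q i1 i2 : ℝ)
    (hF : planarF b (b-b1) ε l1 l2 γ1 γ2 p q (i1, i2) = 0) :
    p*(l1*i1+l2*i2)*(1-(i1+i2)) = i1*((b+ε+γ1) - ((b-b1)+ε)*(i1+i2)) ∧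
    q*(l1*i1+l2*i2)*(1-(i1+i2)) = i2*((b+ε+γ2) - ((b-b1)+ε)*(i1+i2)) := by
  have h1 : (planarF b (b-b1) ε l1 l2 γ1 γ2 p q (i1, i2)).1 = 0 := by rw [hF]; rfl
  have h2 : (planarF b (b-b1) ε l1 l2 γ1 γ2 p q (i1, i2)).2 = 0 := by rw [hF]; rfl
  simp only [planarF] at h1 h2
  exact ⟨by linear_combination h1, by linear_combination h2⟩

/-- Basic positivity facts and the scalar constraint at an interior equilibrium. -/
lemma planar_facts (b b1 ε l1 l2 γ1 γ2 p q i1 i2 : ℝ)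
    (hb1 : 0 < b1) (hε : 0 < ε) (hl1 : 0 < l1) (hl2 : 0 < l2)
    (hγ1 : 0 < γ1) (hγ2 : 0 < γ2) (hp : 0 < p) (hq : 0 < q) (hb : b1 ≤ b)
    (hi1 : 0 < i1) (hi2 : 0 < i2) (hin : i1 + i2 < 1)
    (heq1 : p*(l1*i1+l2*i2)*(1-(i1+i2)) = i1*((b+ε+γ1) - ((b-b1)+ε)*(i1+i2)))
    (heq2 : q*(l1*i1+l2*i2)*(1-(i1+i2)) = i2*((b+ε+γ2) - ((b-b1)+ε)*(i1+i2))) :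
    0 < ((b+ε+γ1) - ((b-b1)+ε)*(i1+i2)) ∧ 0 < ((b+ε+γ2) - ((b-b1)+ε)*(i1+i2)) ∧
    (1-(i1+i2))*(p*l1*((b+ε+γ2) - ((b-b1)+ε)*(i1+i2)) + q*l2*((b+ε+γ1) - ((b-b1)+ε)*(i1+i2))) = ((b+ε+γ1) - ((b-b1)+ε)*(i1+i2))*((b+ε+γ2) - ((b-b1)+ε)*(i1+i2)) := by
  have hm : (0:ℝ) < (1-(i1+i2)) := by linarith
  have hB : (0:ℝ) < ((b-b1)+ε) := by linarith
  have hu : (0:ℝ) < ((b+ε+γ1) - ((b-b1)+ε)*(i1+i2)) := by nlinarith [mul_pos hB hm]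
  have hv : (0:ℝ) < ((b+ε+γ2) - ((b-b1)+ε)*(i1+i2)) := by nlinarith [mul_pos hB hm]
  have hL : (0:ℝ) < (l1*i1+l2*i2) := by positivity
  refine ⟨hu, hv, mul_left_cancel₀ (ne_of_gt hL) ?_⟩
  linear_combination (l1*((b+ε+γ2) - ((b-b1)+ε)*(i1+i2)))*heq1 + (l2*((b+ε+γ1) - ((b-b1)+ε)*(i1+i2)))*heq2

set_option maxHeartbeats 1000000 in
/-- Trace and determinant signs at an interior equilibrium. -/
lemma planar_trdet (b b1 ε l1 l2 γ1 γ2 p q i1 i2 e1 e2 e3 e4 : ℝ)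
    (hb1 : 0 < b1) (hε : 0 < ε) (hl1 : 0 < l1) (hl2 : 0 < l2)
    (hγ1 : 0 < γ1) (hγ2 : 0 < γ2) (hp : 0 < p) (hq : 0 < q) (hb : b1 ≤ b)
    (hi1 : 0 < i1) (hi2 : 0 < i2) (hin : i1 + i2 < 1)
    (heq1 : p*(l1*i1+l2*i2)*(1-(i1+i2)) = i1*((b+ε+γ1) - ((b-b1)+ε)*(i1+i2)))
    (heq2 : q*(l1*i1+l2*i2)*(1-(i1+i2)) = i2*((b+ε+γ2) - ((b-b1)+ε)*(i1+i2)))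
    (h1 : e1 = (p*l1 - b - ε - γ1) + (((b-b1) + ε - p*l1)*i1 - p*l2*i2) + (i1 + i2)*((b-b1) + ε - p*l1))
    (h2 : e2 = p*l2 + (((b-b1) + ε - p*l1)*i1 - p*l2*i2) - (i1 + i2)*(p*l2))
    (h3 : e3 = q*l1 + (((b-b1) + ε - q*l2)*i2 - q*l1*i1) - (i1 + i2)*(q*l1))
    (h4 : e4 = (q*l2 - b - ε - γ2) + (((b-b1) + ε - q*l2)*i2 - q*l1*i1) + (i1 + i2)*((b-b1) + ε - q*l2)) :
    e1 + e4 < 0 ∧ 0 < e1*e4 - e2*e3 := by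
  obtain ⟨m, hmd⟩ : ∃ m : ℝ, m = 1 - (i1+i2) := ⟨_, rfl⟩
  obtain ⟨B, hBd⟩ : ∃ B : ℝ, B = (b-b1) + ε := ⟨_, rfl⟩
  obtain ⟨u, hud⟩ : ∃ u : ℝ, u = (b+ε+γ1) - ((b-b1)+ε)*(i1+i2) := ⟨_, rfl⟩
  obtain ⟨v, hvd⟩ : ∃ v : ℝ, v = (b+ε+γ2) - ((b-b1)+ε)*(i1+i2) := ⟨_, rfl⟩
  obtain ⟨L, hLd⟩ : ∃ L : ℝ, L = l1*i1 + l2*i2 := ⟨_, rfl⟩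
  obtain ⟨g1, hg1d⟩ : ∃ g : ℝ, g = b1 + γ1 := ⟨_, rfl⟩
  obtain ⟨g2, hg2d⟩ : ∃ g : ℝ, g = b1 + γ2 := ⟨_, rfl⟩
  -- equilibrium equations in atoms
  have heq1' : p*L*m = i1*u := by rw [hmd, hud, hLd]; linear_combination heq1
  have heq2' : q*L*m = i2*v := by rw [hmd, hvd, hLd]; linear_combination heq2
  have heq1s : p*(l1*i1+l2*i2)*m = i1*u := by rw [hmd, hud]; linear_combination heq1
  have heq2s : q*(l1*i1+l2*i2)*m = i2*v := by rw [hmd, hvd]; linear_combination heq2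
  -- relations
  have relu : u = g1 + B*m := by rw [hud, hg1d, hBd, hmd]; ring
  have relv : v = g2 + B*m := by rw [hvd, hg2d, hBd, hmd]; ring
  have relL : L = l1*i1 + l2*i2 := hLd
  -- entries in atoms
  have hS1 : e1 = p*l1*m - u + (B*i1 - p*L) := by
    rw [hmd, hud, hBd, hLd, h1]; ring
  have hS2 : e2 = p*l2*m + (B*i1 - p*L) := by
    rw [hmd, hBd, hLd, h2]; ring
  have hS3 : e3 = q*l1*m + (B*i2 - q*L) := by
    rw [hmd, hBd, hLd, h3]; ring
  have hS4 : e4 = q*l2*m - v + (B*i2 - q*L) := by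
    rw [hmd, hvd, hBd, hLd, h4]; ring
  -- positivity
  have hm0 : 0 < m := by rw [hmd]; linarith
  have hB0 : 0 < B := by rw [hBd]; linarith
  have hg10 : 0 < g1 := by rw [hg1d]; linarith
  have hg20 : 0 < g2 := by rw [hg2d]; linarith
  have hu0 : 0 < u := by rw [relu]; nlinarith [mul_pos hB0 hm0]
  have hv0 : 0 < v := by rw [relv]; nlinarith [mul_pos hB0 hm0]
  have hL0 : 0 < L := by rw [hLd]; positivity
  -- scalar constraint
  have hC : m*(p*l1*v + q*l2*u) = u*v := by
    refine mul_left_cancel₀ (ne_of_gt hL0) ?_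
    linear_combination (l1*v)*heq1' + (l2*u)*heq2' - (u*v)*relL
  constructor
  · -- trace negative
    have hTL : m*((e1+e4)*L) = -(m*u*(l2*i2)) - m*v*(l1*i1) - (i1*g1+i2*g2)*L := by
      linear_combination (m*L)*hS1 + (m*L)*hS4 + (-(L*i1))*relu + (-(L*i2))*relv
        + (v*i2 + u*i1 - m*q*l2*i2 - m*q*l1*i1 - m*p*l2*i2 - m*p*l1*i1
           - m*L*q - m*L*p - m*v - m*u + m^2*q*l2 + m^2*p*l1)*relL
        + (m*l1 - l2*i2 - l1*i1)*heq1s + (m*l2 - l2*i2 - l1*i1)*heq2s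
    have t1 := mul_pos (mul_pos hm0 hu0) (mul_pos hl2 hi2)
    have t2 := mul_pos (mul_pos hm0 hv0) (mul_pos hl1 hi1)
    have t3 := mul_pos (add_pos (mul_pos hi1 hg10) (mul_pos hi2 hg20)) hL0
    have hneg : m*((e1+e4)*L) < 0 := by rw [hTL]; linarith
    by_contra h'
    push_neg at h'
    have : 0 ≤ m*((e1+e4)*L) := mul_nonneg hm0.le (mul_nonneg h' hL0.le)
    linarith
  · -- determinant positive
    have hD2 : u*v*(m*(e1*e4 - e2*e3))
        = L*m*(m*p*q*(l1-l2)*(g1*v - g2*u) + p*g1*v^2 + q*g2*u^2) := by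
      linear_combination (u*v*m*e4)*hS1 + (u*v*m*(p*l1*m - u + (B*i1 - p*L)))*hS4
        - (u*v*m*e3)*hS2 - (u*v*m*(p*l2*m + (B*i1 - p*L)))*hS3
        + (m*v^2*L*p - m^2*v*L*p*q*l2 + m^2*v*L*p*q*l1)*relu
        + (m*u^2*L*q + m^2*u*L*p*q*l2 - m^2*u*L*p*q*l1)*relv
        + (m^2*B*v^2*p + m^2*B*u^2*q - m^3*B*v*p*q*l2 + m^3*B*v*p*q*l1
           + m^3*B*u*p*q*l2 - m^3*B*u*p*q*l1)*relL
        + (m*B*v^2 - m*B*u*v - m^2*B*v*q*l2 + m^2*B*v*q*l1 + m^2*B*u*q*l2 - m^2*B*u*q*l1)*heq1s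
        + (-(m*u*v) + m*B*u*i2 + m*B*u*i1)*hC
    have hWuv : (m*p*q*(l1-l2)*(g1*v - g2*u) + p*g1*v^2 + q*g2*u^2)*(u*v)
        = m*(q^2*l2*u^3*g2 + p^2*l1*v^3*g1 + p*q*l1*u*v^2*g1 + p*q*l2*u^2*v*g2) := by
      linear_combination (-(v^2*g1*p) - u^2*g2*q)*hC
    have k1 : (0:ℝ) < q^2*l2*u^3*g2 :=
      mul_pos (mul_pos (mul_pos (pow_pos hq 2) hl2) (pow_pos hu0 3)) hg20
    have k2 : (0:ℝ) < p^2*l1*v^3*g1 :=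
      mul_pos (mul_pos (mul_pos (pow_pos hp 2) hl1) (pow_pos hv0 3)) hg10
    have k3 : (0:ℝ) < p*q*l1*u*v^2*g1 :=
      mul_pos (mul_pos (mul_pos (mul_pos (mul_pos hp hq) hl1) hu0) (pow_pos hv0 2)) hg10
    have k4 : (0:ℝ) < p*q*l2*u^2*v*g2 :=
      mul_pos (mul_pos (mul_pos (mul_pos (mul_pos hp hq) hl2) (pow_pos hu0 2)) hv0) hg20
    have hR : (0:ℝ) < m*(q^2*l2*u^3*g2 + p^2*l1*v^3*g1 + p*q*l1*u*v^2*g1 + p*q*l2*u^2*v*g2) :=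
      mul_pos hm0 (by linarith)
    have hWpos : (0:ℝ) < m*p*q*(l1-l2)*(g1*v - g2*u) + p*g1*v^2 + q*g2*u^2 := by
      by_contra h'
      push_neg at h'
      have h2 : (m*p*q*(l1-l2)*(g1*v - g2*u) + p*g1*v^2 + q*g2*u^2)*(u*v) ≤ 0 :=
        mul_nonpos_iff.mpr (Or.inr ⟨h', (mul_pos hu0 hv0).le⟩)
      rw [hWuv] at h2
      linarith
    have hpos : 0 < u*v*(m*(e1*e4 - e2*e3)) := by
      rw [hD2]; exact mul_pos (mul_pos hL0 hm0) hWpos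
    by_contra h'
    push_neg at h'
    have h3 : u*v*(m*(e1*e4 - e2*e3)) ≤ 0 :=
      mul_nonpos_iff.mpr (Or.inl ⟨(mul_pos hu0 hv0).le, mul_nonpos_iff.mpr (Or.inl ⟨hm0.le, h'⟩)⟩)
    linarith

lemma det_aux (a b c d : ℝ) (μ : ℂ) :
    ((algebraMap ℂ (Matrix (Fin 2) (Fin 2) ℂ)) μ - (!![a,b;c,d]).map Complex.ofReal).det
      = μ^2 - (↑(a+d))*μ + ↑(a*d - b*c) := by
  simp [Matrix.det_fin_two, Matrix.algebraMap_matrix_apply]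
  ring

set_option maxHeartbeats 4000000 in
theorem stmt15 (b b1 b2 d ε l1 l2 γ1 γ2 p q : ℝ)
    (hb1 : 0 < b1) (hd : 0 < d) (hε : 0 < ε) (hl1 : 0 < l1) (hl2 : 0 < l2)
    (hγ1 : 0 < γ1) (hγ2 : 0 < γ2) (hp : 0 < p) (hq : 0 < q)
    (hb : b1 ≤ b) (hb2 : b2 = b - b1) (hpq : p + q = 1) :
    (∀ x y : ℝ × ℝ,
      (0 < x.1 ∧ 0 < x.2 ∧ x.1 + x.2 < 1) → planarF b b2 ε l1 l2 γ1 γ2 p q x = 0 →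
      (0 < y.1 ∧ 0 < y.2 ∧ y.1 + y.2 < 1) → planarF b b2 ε l1 l2 γ1 γ2 p q y = 0 →
      x = y) ∧
    (∀ x : ℝ × ℝ, (0 < x.1 ∧ 0 < x.2 ∧ x.1 + x.2 < 1) → planarF b b2 ε l1 l2 γ1 γ2 p q x = 0 →
      ∀ μ ∈ spectrum ℂ ((planarJac b b2 ε l1 l2 γ1 γ2 p q x).map Complex.ofReal), μ.re ≠ 0) := by
  subst hb2
  constructor
  · rintro ⟨i1, i2⟩ ⟨j1, j2⟩ ⟨hi1, hi2, hin⟩ hFx ⟨hj1, hj2, hjn⟩ hFy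
    simp only at hi1 hi2 hin hj1 hj2 hjn
    obtain ⟨heq1x, heq2x⟩ := planar_equil b b1 ε l1 l2 γ1 γ2 p q i1 i2 hFx
    obtain ⟨heq1y, heq2y⟩ := planar_equil b b1 ε l1 l2 γ1 γ2 p q j1 j2 hFy
    obtain ⟨hux, hvx, hCx⟩ := planar_facts b b1 ε l1 l2 γ1 γ2 p q i1 i2 hb1 hε hl1 hl2 hγ1 hγ2 hp hq hb hi1 hi2 hin heq1x heq2x
    obtain ⟨huy, hvy, hCy⟩ := planar_facts b b1 ε l1 l2 γ1 γ2 p q j1 j2 hb1 hε hl1 hl2 hγ1 hγ2 hp hq hb hj1 hj2 hjn heq1y heq2y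
    have hg1 : (0:ℝ) < (b1+γ1) := by linarith
    have hg2 : (0:ℝ) < (b1+γ2) := by linarith
    have hkey : ((j1+j2) - (i1+i2))*(p*l1*(b1+γ1)*(((b+ε+γ2) - ((b-b1)+ε)*(i1+i2))*((b+ε+γ2) - ((b-b1)+ε)*(j1+j2))) + q*l2*(b1+γ2)*(((b+ε+γ1) - ((b-b1)+ε)*(i1+i2))*((b+ε+γ1) - ((b-b1)+ε)*(j1+j2)))) = 0 := by
      linear_combination (((b+ε+γ1) - ((b-b1)+ε)*(j1+j2))*((b+ε+γ2) - ((b-b1)+ε)*(j1+j2)))*hCx - (((b+ε+γ1) - ((b-b1)+ε)*(i1+i2))*((b+ε+γ2) - ((b-b1)+ε)*(i1+i2)))*hCy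
    have hfac : (0:ℝ) < p*l1*(b1+γ1)*(((b+ε+γ2) - ((b-b1)+ε)*(i1+i2))*((b+ε+γ2) - ((b-b1)+ε)*(j1+j2))) + q*l2*(b1+γ2)*(((b+ε+γ1) - ((b-b1)+ε)*(i1+i2))*((b+ε+γ1) - ((b-b1)+ε)*(j1+j2))) :=
      add_pos (mul_pos (mul_pos (mul_pos hp hl1) hg1) (mul_pos hvx hvy))
        (mul_pos (mul_pos (mul_pos hq hl2) hg2) (mul_pos hux huy))
    have hnn : i1 + i2 = j1 + j2 := by
      rcases mul_eq_zero.mp hkey with h | h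
      · linarith [sub_eq_zero.mp h]
      · exact absurd h (ne_of_gt hfac)
    rw [← hnn] at heq1y heq2y
    have hmx : (0:ℝ) < (1-(i1+i2)) := by linarith
    have hsx : (l1*i1+l2*i2)*((1-(i1+i2))*(p*((b+ε+γ2) - ((b-b1)+ε)*(i1+i2))+q*((b+ε+γ1) - ((b-b1)+ε)*(i1+i2)))) = ((i1+i2))*(((b+ε+γ1) - ((b-b1)+ε)*(i1+i2))*((b+ε+γ2) - ((b-b1)+ε)*(i1+i2))) := by
      linear_combination ((b+ε+γ2) - ((b-b1)+ε)*(i1+i2))*heq1x + ((b+ε+γ1) - ((b-b1)+ε)*(i1+i2))*heq2x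
    have hsy : (l1*j1+l2*j2)*((1-(i1+i2))*(p*((b+ε+γ2) - ((b-b1)+ε)*(i1+i2))+q*((b+ε+γ1) - ((b-b1)+ε)*(i1+i2)))) = ((i1+i2))*(((b+ε+γ1) - ((b-b1)+ε)*(i1+i2))*((b+ε+γ2) - ((b-b1)+ε)*(i1+i2))) := by
      linear_combination ((b+ε+γ2) - ((b-b1)+ε)*(i1+i2))*heq1y + ((b+ε+γ1) - ((b-b1)+ε)*(i1+i2))*heq2y - (((b+ε+γ1) - ((b-b1)+ε)*(i1+i2))*((b+ε+γ2) - ((b-b1)+ε)*(i1+i2)))*hnn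
    have hfac2 : (0:ℝ) < (1-(i1+i2))*(p*((b+ε+γ2) - ((b-b1)+ε)*(i1+i2))+q*((b+ε+γ1) - ((b-b1)+ε)*(i1+i2))) :=
      mul_pos hmx (add_pos (mul_pos hp hvx) (mul_pos hq hux))
    have hLL : (l1*i1+l2*i2) = (l1*j1+l2*j2) :=
      mul_right_cancel₀ (ne_of_gt hfac2) (by linear_combination hsx - hsy)
    have hone : i1 = j1 := by
      have h5 : i1*((b+ε+γ1) - ((b-b1)+ε)*(i1+i2)) = j1*((b+ε+γ1) - ((b-b1)+ε)*(i1+i2)) := by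
        linear_combination heq1y - heq1x + (p*(1-(i1+i2)))*hLL
      exact mul_right_cancel₀ (ne_of_gt hux) h5
    have htwo : i2 = j2 := by
      have h5 : i2*((b+ε+γ2) - ((b-b1)+ε)*(i1+i2)) = j2*((b+ε+γ2) - ((b-b1)+ε)*(i1+i2)) := by
        linear_combination heq2y - heq2x + (q*(1-(i1+i2)))*hLL
      exact mul_right_cancel₀ (ne_of_gt hvx) h5
    simp [Prod.ext_iff, hone, htwo]
  · rintro ⟨i1, i2⟩ ⟨hi1, hi2, hin⟩ hFx μ hμ
    simp only at hi1 hi2 hin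
    obtain ⟨heq1, heq2⟩ := planar_equil b b1 ε l1 l2 γ1 γ2 p q i1 i2 hFx
    obtain ⟨hTr, hDet⟩ := planar_trdet b b1 ε l1 l2 γ1 γ2 p q i1 i2 _ _ _ _
      hb1 hε hl1 hl2 hγ1 hγ2 hp hq hb hi1 hi2 hin heq1 heq2 rfl rfl rfl rfl
    rw [spectrum.mem_iff] at hμ
    have hdet : ((algebraMap ℂ (Matrix (Fin 2) (Fin 2) ℂ)) μ
        - ((planarJac b (b-b1) ε l1 l2 γ1 γ2 p q (i1, i2)).map Complex.ofReal)).det = 0 := by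
      by_contra hne
      exact hμ ((Matrix.isUnit_iff_isUnit_det _).mpr (isUnit_iff_ne_zero.mpr hne))
    rw [show planarJac b (b-b1) ε l1 l2 γ1 γ2 p q (i1, i2) = !![((p*l1 - b - ε - γ1) + (((b-b1) + ε - p*l1)*i1 - p*l2*i2) + (i1 + i2)*((b-b1) + ε - p*l1)), (p*l2 + (((b-b1) + ε - p*l1)*i1 - p*l2*i2) - (i1 + i2)*(p*l2)); (q*l1 + (((b-b1) + ε - q*l2)*i2 - q*l1*i1) - (i1 + i2)*(q*l1)), ((q*l2 - b - ε - γ2) + (((b-b1) + ε - q*l2)*i2 - q*l1*i1) + (i1 + i2)*((b-b1) + ε - q*l2))] from rfl] at hdet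
    rw [det_aux] at hdet
    set T : ℝ := ((p*l1 - b - ε - γ1) + (((b-b1) + ε - p*l1)*i1 - p*l2*i2) + (i1 + i2)*((b-b1) + ε - p*l1)) + ((q*l2 - b - ε - γ2) + (((b-b1) + ε - q*l2)*i2 - q*l1*i1) + (i1 + i2)*((b-b1) + ε - q*l2)) with hTdef
    set D : ℝ := ((p*l1 - b - ε - γ1) + (((b-b1) + ε - p*l1)*i1 - p*l2*i2) + (i1 + i2)*((b-b1) + ε - p*l1))*((q*l2 - b - ε - γ2) + (((b-b1) + ε - q*l2)*i2 - q*l1*i1) + (i1 + i2)*((b-b1) + ε - q*l2)) - (p*l2 + (((b-b1) + ε - p*l1)*i1 - p*l2*i2) - (i1 + i2)*(p*l2))*(q*l1 + (((b-b1) + ε - q*l2)*i2 - q*l1*i1) - (i1 + i2)*(q*l1)) with hDdef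
    intro h0
    have hre := congrArg Complex.re hdet
    have him := congrArg Complex.im hdet
    simp [pow_two, Complex.mul_re, Complex.mul_im, h0] at hre him
    have hy : μ.im = 0 := by
      rcases him with h | h
      · linarith
      · exact h
    rw [hy] at hre
    simp at hre
    linarith
end

section
/- If R0 ≤ 1, then the origin is the only equilibrium of the planar system in D1: for every (i1, i2) ∈ D1 with F(i1, i2) = (0, 0) one has (i1, i2) = (0, 0). -/
open Filter Topology Matrix

set_option maxHeartbeats 1000000 in
theorem stmt16 (b b1 b2 d ε l1 l2 γ1 γ2 p q : ℝ)
    (hb1 : 0 < b1) (hd : 0 < d) (hε : 0 < ε) (hl1 : 0 < l1) (hl2 : 0 < l2)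
    (hγ1 : 0 < γ1) (hγ2 : 0 < γ2) (hp : 0 < p) (hq : 0 < q)
    (hb : b1 ≤ b) (hb2 : b2 = b - b1) (hpq : p + q = 1)
    (hR0 : p*l1/(b + ε + γ1) + q*l2/(b + ε + γ2) ≤ 1) :
    ∀ x : ℝ × ℝ, (0 ≤ x.1 ∧ 0 ≤ x.2 ∧ x.1 + x.2 ≤ 1) →
      planarF b b2 ε l1 l2 γ1 γ2 p q x = 0 → x = (0, 0) := by
  rintro ⟨i1, i2⟩ ⟨h1, h2, h3⟩ hF
  simp only [planarF, Prod.mk.injEq, Prod.ext_iff, Prod.fst_zero, Prod.snd_zero] at hF ⊢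
  obtain ⟨e1, e2⟩ := hF
  simp only at h1 h2 h3 e1 e2 ⊢
  subst hb2
  obtain ⟨s, hs⟩ : ∃ s : ℝ, s = i1 + i2 := ⟨_, rfl⟩
  obtain ⟨B1, hB1def⟩ : ∃ B1 : ℝ, B1 = b + ε + γ1 := ⟨_, rfl⟩
  obtain ⟨B2, hB2def⟩ : ∃ B2 : ℝ, B2 = b + ε + γ2 := ⟨_, rfl⟩
  obtain ⟨A1, hA1def⟩ : ∃ A1 : ℝ, A1 = B1 - s*(b - b1 + ε) := ⟨_, rfl⟩
  obtain ⟨A2, hA2def⟩ : ∃ A2 : ℝ, A2 = B2 - s*(b - b1 + ε) := ⟨_, rfl⟩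
  obtain ⟨L, hLdef⟩ : ∃ L : ℝ, L = (l1*i1 + l2*i2) * (1 - s) := ⟨_, rfl⟩
  have hB1 : 0 < B1 := by rw [hB1def]; linarith
  have hB2 : 0 < B2 := by rw [hB2def]; linarith
  have hsnn : 0 ≤ s := by rw [hs]; linarith
  have hs1 : s ≤ 1 := by rw [hs]; linarith
  have hbe : 0 < b - b1 + ε := by linarith
  have hA1 : 0 < A1 := by rw [hA1def, hB1def]; nlinarith
  have hA2 : 0 < A2 := by rw [hA2def, hB2def]; nlinarith
  -- equilibrium equations in factored form
  have eq1 : A1 * i1 = p * L := by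
    rw [hA1def, hB1def, hLdef, hs]; linear_combination -e1
  have eq2 : A2 * i2 = q * L := by
    rw [hA2def, hB2def, hLdef, hs]; linear_combination -e2
  by_contra hne
  have hs0 : 0 < s := by
    rcases lt_or_eq_of_le h1 with h | h
    · rw [hs]; linarith
    · rcases lt_or_eq_of_le h2 with h' | h'
      · rw [hs]; linarith
      · exact absurd ⟨h.symm, h'.symm⟩ hne
  have hL0 : 0 ≤ L := by
    have h := eq1 ▸ mul_nonneg hA1.le h1
    exact le_of_not_gt fun hL => absurd h (not_le.mpr (mul_neg_of_pos_of_neg hp hL))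
  have hLpos : 0 < L := by
    rcases lt_or_eq_of_le hL0 with h | h
    · exact h
    · exfalso
      have hi1 : i1 = 0 := by
        have h0 : A1 * i1 = 0 := by rw [eq1, ← h, mul_zero]
        exact (mul_eq_zero.mp h0).resolve_left hA1.ne'
      have hi2 : i2 = 0 := by
        have h0 : A2 * i2 = 0 := by rw [eq2, ← h, mul_zero]
        exact (mul_eq_zero.mp h0).resolve_left hA2.ne'
      rw [hs, hi1, hi2] at hs0; linarith
  have h1s : 0 < 1 - s := by
    rcases lt_or_eq_of_le hs1 with h | h
    · linarith
    · exfalso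
      rw [hLdef, ← h] at hLpos
      simp at hLpos
  -- key equation
  have key : A1 * A2 = (1 - s) * (p*l1*A2 + q*l2*A1) := by
    have hL : A1 * A2 * L = (1 - s) * (p*l1*A2 + q*l2*A1) * L := by
      have h : A1 * A2 * L = (1-s) * (l1 * (A1*i1) * A2 + l2 * (A2*i2) * A1) := by
        rw [hLdef]; ring
      rw [h, eq1, eq2]; ring
    exact mul_right_cancel₀ (ne_of_gt hLpos) hL
  -- R0 ≤ 1 in product form
  have hR0' : p*l1*B2 + q*l2*B1 ≤ B1*B2 := by
    rw [hB1def, hB2def]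
    rw [div_add_div _ _ (by rw [hB1def] at hB1; linarith : (b + ε + γ1) ≠ 0)
        (by rw [hB2def] at hB2; linarith : (b + ε + γ2) ≠ 0),
        div_le_one (by rw [hB1def] at hB1; rw [hB2def] at hB2; positivity)] at hR0
    linarith
  have hlt1 : (1-s)*B1 < A1 := by
    rw [hA1def, hB1def]; nlinarith
  have hlt2 : (1-s)*B2 < A2 := by
    rw [hA2def, hB2def]; nlinarith
  -- contradiction
  nlinarith [mul_lt_mul_of_pos_left hlt1 (mul_pos (mul_pos (mul_pos hp hl1) hA2) hB2),
    mul_lt_mul_of_pos_left hlt2 (mul_pos (mul_pos (mul_pos hq hl2) hA1) hB1),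
    mul_le_mul_of_nonneg_left hR0' (mul_pos hA1 hA2).le,
    mul_pos hA1 hA2, mul_pos hB1 hB2]
end

section
/- If R0 > 1, then the planar system has exactly one equilibrium (the endemic equilibrium) in the interior of D1: there exists a unique (i1, i2) with i1 > 0, i2 > 0, i1 + i2 < 1 and F(i1, i2) = (0, 0). -/
open Filter Topology Matrix

/-!
Write `A = b + ε + γ1`, `B = b + ε + γ2`, `m = b2 + ε` and `s = i1 + i2`. The equilibrium
equations say `p (l1 i1 + l2 i2)(1 - s) = (A - m s) i1` and the same with `q, B, i2`, so an
interior equilibrium is a positive multiple of `(p / (A - m s), q / (B - m s))`, and dividing the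
force of infection `l1 i1 + l2 i2` out shows that `s` solves `effectiveR s = 1`, where
`effectiveR s = (1 - s)(p l1 / (A - m s) + q l2 / (B - m s))`. Since `m < A, B`, `effectiveR`
decreases strictly on `[0, 1]` from `R0 > 1` at `0` to `0` at `1`, so it takes the value `1`
exactly once; conversely that root gives back an equilibrium.
-/

section EffectiveReproduction

variable {A B m p q l1 l2 : ℝ}

noncomputable def effectiveR (A B m p q l1 l2 s : ℝ) : ℝ :=
  (1 - s) * (p * l1 / (A - m * s) + q * l2 / (B - m * s))

def IsReducedEquilibrium (A B m p q l1 l2 : ℝ) (e : ℝ × ℝ) : Prop :=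
  p * (l1 * e.1 + l2 * e.2) * (1 - (e.1 + e.2)) = (A - m * (e.1 + e.2)) * e.1 ∧
    q * (l1 * e.1 + l2 * e.2) * (1 - (e.1 + e.2)) = (B - m * (e.1 + e.2)) * e.2

noncomputable def endemicPoint (A B m p q s : ℝ) : ℝ × ℝ :=
  let u := p / (A - m * s)
  let v := q / (B - m * s)
  (s * u / (u + v), s * v / (u + v))

lemma sub_mul_pos_of_mem_Icc (hA : 0 < A) (hmA : m < A) {s : ℝ} (hs : s ∈ Set.Icc (0 : ℝ) 1) :
    0 < A - m * s := by
  rcases le_or_gt m 0 with hm | hm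
  · nlinarith [mul_nonpos_of_nonpos_of_nonneg hm hs.1]
  · nlinarith [mul_le_mul_of_nonneg_left hs.2 hm.le]

lemma continuousOn_effectiveR (hA : 0 < A) (hB : 0 < B) (hmA : m < A) (hmB : m < B) :
    ContinuousOn (effectiveR A B m p q l1 l2) (Set.Icc 0 1) := by
  unfold effectiveR
  refine continuousOn_const.sub continuousOn_id |>.mul (.add ?_ ?_)
  · exact continuousOn_const.div (by fun_prop) fun s hs => (sub_mul_pos_of_mem_Icc hA hmA hs).ne'
  · exact continuousOn_const.div (by fun_prop) fun s hs => (sub_mul_pos_of_mem_Icc hB hmB hs).ne'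

lemma strictAntiOn_one_sub_div (hA : 0 < A) (hmA : m < A) :
    StrictAntiOn (fun s => (1 - s) / (A - m * s)) (Set.Icc 0 1) := by
  intro x hx y hy hxy
  rw [div_lt_div_iff₀ (sub_mul_pos_of_mem_Icc hA hmA hy) (sub_mul_pos_of_mem_Icc hA hmA hx)]
  -- the two sides differ by `(y - x) (A - m)`
  linarith [mul_pos (sub_pos.2 hxy) (sub_pos.2 hmA)]

lemma strictAntiOn_effectiveR (hA : 0 < A) (hB : 0 < B) (hmA : m < A) (hmB : m < B)
    (hp : 0 < p) (hq : 0 < q) (hl1 : 0 < l1) (hl2 : 0 < l2) :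
    StrictAntiOn (effectiveR A B m p q l1 l2) (Set.Icc 0 1) := by
  intro x hx y hy hxy
  have h1 := mul_lt_mul_of_pos_left (strictAntiOn_one_sub_div hA hmA hx hy hxy)
    (mul_pos hp hl1)
  have h2 := mul_lt_mul_of_pos_left (strictAntiOn_one_sub_div hB hmB hx hy hxy)
    (mul_pos hq hl2)
  have expand : ∀ s, effectiveR A B m p q l1 l2 s =
      p * l1 * ((1 - s) / (A - m * s)) + q * l2 * ((1 - s) / (B - m * s)) := fun s => by
    unfold effectiveR; ring
  rw [expand, expand]
  linarith

lemma exists_effectiveR_eq_one (hA : 0 < A) (hB : 0 < B) (hmA : m < A) (hmB : m < B)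
    (hR0 : 1 < p * l1 / A + q * l2 / B) :
    ∃ n ∈ Set.Ioo (0 : ℝ) 1, effectiveR A B m p q l1 l2 n = 1 := by
  have hR1 : effectiveR A B m p q l1 l2 1 = 0 := by simp [effectiveR]
  have hR0' : effectiveR A B m p q l1 l2 0 = p * l1 / A + q * l2 / B := by simp [effectiveR]
  exact intermediate_value_Ioo' zero_le_one (continuousOn_effectiveR hA hB hmA hmB)
    ⟨hR1 ▸ one_pos, hR0' ▸ hR0⟩

lemma endemicPoint_fst_add_snd (hA : 0 < A) (hB : 0 < B) (hmA : m < A) (hmB : m < B)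
    (hp : 0 < p) (hq : 0 < q) {n : ℝ} (hn : n ∈ Set.Icc (0 : ℝ) 1) :
    (endemicPoint A B m p q n).1 + (endemicPoint A B m p q n).2 = n := by
  have := sub_mul_pos_of_mem_Icc hA hmA hn
  have := sub_mul_pos_of_mem_Icc hB hmB hn
  simp only [endemicPoint]
  rw [← add_div, ← mul_add, mul_div_cancel_right₀ _ (by positivity)]

lemma isReducedEquilibrium_endemicPoint (hA : 0 < A) (hB : 0 < B) (hmA : m < A) (hmB : m < B)
    (hp : 0 < p) (hq : 0 < q) {n : ℝ} (hn : n ∈ Set.Ioo (0 : ℝ) 1)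
    (hRn : effectiveR A B m p q l1 l2 n = 1) :
    IsReducedEquilibrium A B m p q l1 l2 (endemicPoint A B m p q n) := by
  have hsum := endemicPoint_fst_add_snd hA hB hmA hmB hp hq (Set.Ioo_subset_Icc_self hn)
  have dA := sub_mul_pos_of_mem_Icc hA hmA (Set.Ioo_subset_Icc_self hn)
  have dB := sub_mul_pos_of_mem_Icc hB hmB (Set.Ioo_subset_Icc_self hn)
  have hRn' : (1 - n) * (l1 * (p / (A - m * n)) + l2 * (q / (B - m * n))) = 1 := by
    rw [effectiveR] at hRn; linear_combination hRn
  rw [IsReducedEquilibrium, hsum]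
  simp only [endemicPoint]
  set u := p / (A - m * n)
  set v := q / (B - m * n)
  have hu : (A - m * n) * u = p := mul_div_cancel₀ _ dA.ne'
  have hv : (B - m * n) * v = q := mul_div_cancel₀ _ dB.ne'
  constructor
  · linear_combination p * n * (u + v)⁻¹ * hRn' - n * (u + v)⁻¹ * hu
  · linear_combination q * n * (u + v)⁻¹ * hRn' - n * (u + v)⁻¹ * hv

lemma IsReducedEquilibrium.eq_mul_div {e : ℝ × ℝ} (he : IsReducedEquilibrium A B m p q l1 l2 e)
    (hA : A - m * (e.1 + e.2) ≠ 0) (hB : B - m * (e.1 + e.2) ≠ 0) :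
    e.1 = (l1 * e.1 + l2 * e.2) * (1 - (e.1 + e.2)) * (p / (A - m * (e.1 + e.2))) ∧
      e.2 = (l1 * e.1 + l2 * e.2) * (1 - (e.1 + e.2)) * (q / (B - m * (e.1 + e.2))) := by
  constructor
  · rw [mul_div_assoc', eq_div_iff hA]; linear_combination -he.1
  · rw [mul_div_assoc', eq_div_iff hB]; linear_combination -he.2

lemma IsReducedEquilibrium.effectiveR_eq_one {e : ℝ × ℝ}
    (he : IsReducedEquilibrium A B m p q l1 l2 e) (he₀ : 0 < e.1 ∧ 0 < e.2 ∧ e.1 + e.2 < 1)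
    (hA : 0 < A) (hB : 0 < B) (hmA : m < A) (hmB : m < B) (hl1 : 0 < l1) (hl2 : 0 < l2) :
    effectiveR A B m p q l1 l2 (e.1 + e.2) = 1 := by
  obtain ⟨h1, h2, hs⟩ := he₀
  have hs' : e.1 + e.2 ∈ Set.Icc (0 : ℝ) 1 := ⟨by positivity, hs.le⟩
  obtain ⟨he1, he2⟩ := he.eq_mul_div (sub_mul_pos_of_mem_Icc hA hmA hs').ne'
    (sub_mul_pos_of_mem_Icc hB hmB hs').ne'
  have hL : 0 < l1 * e.1 + l2 * e.2 := by positivity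
  refine mul_left_cancel₀ hL.ne' ?_
  rw [effectiveR]
  linear_combination -l1 * he1 - l2 * he2

lemma IsReducedEquilibrium.eq_endemicPoint {e : ℝ × ℝ}
    (he : IsReducedEquilibrium A B m p q l1 l2 e) (he₀ : 0 < e.1 ∧ 0 < e.2 ∧ e.1 + e.2 < 1)
    (hA : 0 < A) (hB : 0 < B) (hmA : m < A) (hmB : m < B) (hp : 0 < p) (hq : 0 < q) :
    e = endemicPoint A B m p q (e.1 + e.2) := by
  obtain ⟨h1, h2, hs⟩ := he₀
  have hs' : e.1 + e.2 ∈ Set.Icc (0 : ℝ) 1 := ⟨by positivity, hs.le⟩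
  have dA := sub_mul_pos_of_mem_Icc hA hmA hs'
  have dB := sub_mul_pos_of_mem_Icc hB hmB hs'
  obtain ⟨he1, he2⟩ := he.eq_mul_div dA.ne' dB.ne'
  have huv : 0 < p / (A - m * (e.1 + e.2)) + q / (B - m * (e.1 + e.2)) := by positivity
  simp only [endemicPoint]
  ext
  · rw [eq_div_iff huv.ne']
    linear_combination q / (B - m * (e.1 + e.2)) * he1 - p / (A - m * (e.1 + e.2)) * he2
  · rw [eq_div_iff huv.ne']
    linear_combination p / (A - m * (e.1 + e.2)) * he2 - q / (B - m * (e.1 + e.2)) * he1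

theorem existsUnique_isReducedEquilibrium (hA : 0 < A) (hB : 0 < B) (hmA : m < A) (hmB : m < B)
    (hp : 0 < p) (hq : 0 < q) (hl1 : 0 < l1) (hl2 : 0 < l2)
    (hR0 : 1 < p * l1 / A + q * l2 / B) :
    ∃! e : ℝ × ℝ, (0 < e.1 ∧ 0 < e.2 ∧ e.1 + e.2 < 1) ∧
      IsReducedEquilibrium A B m p q l1 l2 e := by
  obtain ⟨n, hn, hRn⟩ := exists_effectiveR_eq_one hA hB hmA hmB hR0
  refine ⟨endemicPoint A B m p q n,
    ⟨?_, isReducedEquilibrium_endemicPoint hA hB hmA hmB hp hq hn hRn⟩, ?_⟩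
  · have := sub_mul_pos_of_mem_Icc hA hmA (Set.Ioo_subset_Icc_self hn)
    have := sub_mul_pos_of_mem_Icc hB hmB (Set.Ioo_subset_Icc_self hn)
    have := hn.1
    exact ⟨by simp only [endemicPoint]; positivity, by simp only [endemicPoint]; positivity,
      (endemicPoint_fst_add_snd hA hB hmA hmB hp hq (Set.Ioo_subset_Icc_self hn)).trans_lt hn.2⟩
  · rintro e ⟨he₀, he⟩
    have hs : e.1 + e.2 = n :=
      strictAntiOn_effectiveR hA hB hmA hmB hp hq hl1 hl2 |>.injOn
        ⟨by linarith, he₀.2.2.le⟩ (Set.Ioo_subset_Icc_self hn)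
        ((he.effectiveR_eq_one he₀ hA hB hmA hmB hl1 hl2).trans hRn.symm)
    rw [he.eq_endemicPoint he₀ hA hB hmA hmB hp hq, hs]

end EffectiveReproduction

lemma planarF_eq_zero_iff (b b2 ε l1 l2 γ1 γ2 p q : ℝ) (e : ℝ × ℝ) :
    planarF b b2 ε l1 l2 γ1 γ2 p q e = 0 ↔
      IsReducedEquilibrium (b + ε + γ1) (b + ε + γ2) (b2 + ε) p q l1 l2 e := by
  simp only [Prod.ext_iff, planarF, IsReducedEquilibrium, Prod.fst_zero, Prod.snd_zero]
  constructor <;> rintro ⟨h1, h2⟩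
  · exact ⟨by linear_combination h1, by linear_combination h2⟩
  · exact ⟨by linear_combination h1, by linear_combination h2⟩

theorem stmt18_general (b b1 b2 ε l1 l2 γ1 γ2 p q : ℝ)
    (hb1 : 0 < b1) (hε : 0 < ε) (hl1 : 0 < l1) (hl2 : 0 < l2)
    (hγ1 : 0 < γ1) (hγ2 : 0 < γ2) (hp : 0 < p) (hq : 0 < q)
    (hb : b1 ≤ b) (hb2 : b2 = b - b1)
    (hR0 : 1 < p*l1/(b + ε + γ1) + q*l2/(b + ε + γ2)) :
    ∃! e : ℝ × ℝ, (0 < e.1 ∧ 0 < e.2 ∧ e.1 + e.2 < 1) ∧ planarF b b2 ε l1 l2 γ1 γ2 p q e = 0 := by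
  simp only [planarF_eq_zero_iff]
  subst hb2
  exact existsUnique_isReducedEquilibrium (by linarith) (by linarith) (by linarith) (by linarith)
    hp hq hl1 hl2 hR0

theorem stmt18 (b b1 b2 d ε l1 l2 γ1 γ2 p q : ℝ)
    (hb1 : 0 < b1) (hd : 0 < d) (hε : 0 < ε) (hl1 : 0 < l1) (hl2 : 0 < l2)
    (hγ1 : 0 < γ1) (hγ2 : 0 < γ2) (hp : 0 < p) (hq : 0 < q)
    (hb : b1 ≤ b) (hb2 : b2 = b - b1) (hpq : p + q = 1)
    (hR0 : 1 < p*l1/(b + ε + γ1) + q*l2/(b + ε + γ2)) :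
    ∃! e : ℝ × ℝ, (0 < e.1 ∧ 0 < e.2 ∧ e.1 + e.2 < 1) ∧ planarF b b2 ε l1 l2 γ1 γ2 p q e = 0 :=
  stmt18_general b b1 b2 ε l1 l2 γ1 γ2 p q hb1 hε hl1 hl2 hγ1 hγ2 hp hq hb hb2 hR0
end
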